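/- arXiv:1811.03070 — 2 statements merged into one kernel-verified Lean document; each statement's English description precedes it below -/
import Mathlib

section
/- Let F be a shift-periodic map with integer spikes and let U be uniformly distributed on [0,1]. Suppose there exists a countable collection of open, pairwise disjoint intervals {(a_i, b_i) : i ∈ I} such that [0,1] ∖ ⋃_{i∈I} (a_i, b_i) is countable, F_r is linear on each (a_i, b_i), and F_r((a_i, b_i)) = (0,1) for every i ∈ I. Then, setting Y_0 = 0 and Y_n = φ_F(U, n) for n ≥ 1, the process (Y_n)_{n≥0} is an integer-valued discrete-time random walk, and for every m ∈ ℤ, P(Y_n − Y_{n−1} = m) = λ({x ∈ [0,1] : φ_F(x, 1) = m}), where λ denotes Lebesgue measure. -/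
open MeasureTheory ProbabilityTheory Set Filter

/-- The restricted map `F_r : [0,1] → [0,1]`: fractional part of `F x` when finite, `0` otherwise. -/
noncomputable def restrictedMap (F : ℝ → EReal) (x : ℝ) : ℝ :=
  if F x = ⊤ ∨ F x = ⊥ then 0 else Int.fract (F x).toReal

/-- The cocycle `φ_F(x,n) = Σ_{k<n} ⌊F(F_r^k(x))⌋` whenever all terms are finite, else `0`. -/
noncomputable def cocycle (F : ℝ → EReal) (x : ℝ) (n : ℕ) : ℤ :=
  if ∀ k < n, F ((restrictedMap F)^[k] x) ≠ ⊤ ∧ F ((restrictedMap F)^[k] x) ≠ ⊥ then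
    ∑ k ∈ Finset.range n, ⌊(F ((restrictedMap F)^[k] x)).toReal⌋
  else 0

/-- An extended real which is an integer, `+∞` or `-∞`. -/
def IsIntOrInfinite (L : EReal) : Prop := L = ⊤ ∨ L = ⊥ ∨ ∃ m : ℤ, L = ((m : ℝ) : EReal)

/-- A shift-periodic map with integer spikes, with break points `t 0 = 0 < t 1 < ⋯ < t k = 1`. -/
structure ShiftPeriodicSpikes (F : ℝ → EReal) (k : ℕ) (t : ℕ → ℝ) : Prop where
  shift : ∀ x : ℝ, F x = F (Int.fract x) + ((⌊x⌋ : ℝ) : EReal)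
  kpos : 0 < k
  t0 : t 0 = 0
  tk : t k = 1
  tmono : ∀ i, i < k → t i < t (i + 1)
  cont : ∀ i, i < k → ContinuousOn F (Set.Ioo (t i) (t (i + 1)))
  mono : ∀ i, i < k → StrictMonoOn F (Set.Ioo (t i) (t (i + 1))) ∨
    StrictAntiOn F (Set.Ioo (t i) (t (i + 1)))
  expand : ∀ i, i < k → ∀ x ∈ Set.Ioo (t i) (t (i + 1)), ∀ y ∈ Set.Ioo (t i) (t (i + 1)),
    x ≠ y → ENNReal.ofReal |x - y| < (F x - F y).abs
  limR : ∀ i, i < k → ∃ L : EReal,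
    Filter.Tendsto F (nhdsWithin (t i) (Set.Ioi (t i))) (nhds L) ∧ IsIntOrInfinite L
  limL : ∀ i, i < k → ∃ L : EReal,
    Filter.Tendsto F (nhdsWithin (t (i + 1)) (Set.Iio (t (i + 1)))) (nhds L) ∧ IsIntOrInfinite L

/-- With `U` uniform on `[0,1]` (i.e. under the measure `volume.restrict [0,1]`),
the process `Y n = φ_F (h U) n`, `Y 0 = 0`, is an integer-valued discrete-time random walk:
the increments `Z n = Y (n+1) - Y n` are independent and identically distributed, and
`P(Y n - Y (n-1) = m) = λ {x ∈ [0,1] : φ_F (h x) 1 = m}`. -/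
def IsCocycleRandomWalk (F : ℝ → EReal) (h : ℝ → ℝ) : Prop :=
  ProbabilityTheory.iIndepFun
    (fun n x => cocycle F (h x) (n + 1) - cocycle F (h x) n)
    (volume.restrict (Set.Icc (0 : ℝ) 1)) ∧
  (∀ n m : ℕ,
    ProbabilityTheory.IdentDistrib
      (fun x => cocycle F (h x) (n + 1) - cocycle F (h x) n)
      (fun x => cocycle F (h x) (m + 1) - cocycle F (h x) m)
      (volume.restrict (Set.Icc (0 : ℝ) 1)) (volume.restrict (Set.Icc (0 : ℝ) 1))) ∧
  (∀ n : ℕ, ∀ m : ℤ,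
    (volume.restrict (Set.Icc (0 : ℝ) 1))
        {x | cocycle F (h x) (n + 1) - cocycle F (h x) n = m}
      = volume {x ∈ Set.Icc (0 : ℝ) 1 | cocycle F (h x) 1 = m})

lemma affine_preimage_volume (c d : ℝ) (hc : c ≠ 0) (s : Set ℝ) :
    volume ((fun x => c * x + d) ⁻¹' s) = ENNReal.ofReal |c⁻¹| * volume s := by
  have h : (fun x => c * x + d) ⁻¹' s = (fun x => c * x) ⁻¹' ((fun y => y + d) ⁻¹' s) := rfl
  rw [h, Real.volume_preimage_mul_left hc, measure_preimage_add_right]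

/-- An integer strictly between 0 and 1 is impossible. -/
lemma no_int_in_Ioo01 {r : ℝ} (h0 : 0 < r) (h1 : r < 1) (z : ℤ) (hz : r = (z : ℝ)) : False := by
  rw [hz] at h0 h1
  have h2 : 0 < z := by exact_mod_cast h0
  have h3 : z < 1 := by exact_mod_cast h1
  omega

/-- On an open interval where `F` is continuous and finite with prescribed fractional part,
the floor of `F` is constant. -/
lemma floor_const_on (F : ℝ → EReal) (c d p q : ℝ)
    (hcont : ContinuousOn F (Ioo p q))
    (hfin : ∀ x ∈ Ioo p q, F x ≠ ⊤ ∧ F x ≠ ⊥)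
    (hfr : ∀ x ∈ Ioo p q, Int.fract (F x).toReal = c * x + d) :
    ∃ N : ℤ, ∀ x ∈ Ioo p q, (F x).toReal = c * x + d + N := by
  rcases Set.eq_empty_or_nonempty (Ioo p q) with he | hne
  · exact ⟨0, fun x hx => absurd hx (he ▸ notMem_empty x)⟩
  obtain ⟨x0, hx0⟩ := hne
  set G : ℝ → ℝ := fun x => (F x).toReal - (c * x + d) with hG
  have hGfloor : ∀ x ∈ Ioo p q, G x = (⌊(F x).toReal⌋ : ℝ) := by
    intro x hx
    have := hfr x hx
    simp only [hG]
    rw [← this, Int.self_sub_fract]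
  have hGcont : ContinuousOn G (Ioo p q) := by
    apply ContinuousOn.sub
    · intro x hx
      have h1 : ContinuousWithinAt F (Ioo p q) x := hcont x hx
      exact (EReal.tendsto_toReal (hfin x hx).1 (hfin x hx).2).comp h1
    · exact ((continuous_const.mul continuous_id').add continuous_const).continuousOn
  refine ⟨⌊(F x0).toReal⌋, fun x hx => ?_⟩
  have key : G x = G x0 := by
    by_contra hne'
    have himg : IsPreconnected (G '' Ioo p q) := (isPreconnected_Ioo).image G hGcont
    have hoc := himg.ordConnected
    have hx0' : G x0 ∈ G '' Ioo p q := ⟨x0, hx0, rfl⟩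
    have hx' : G x ∈ G '' Ioo p q := ⟨x, hx, rfl⟩
    rcases lt_or_gt_of_ne hne' with hlt | hlt
    · have hmid : G x + 1/2 ∈ Icc (G x) (G x0) := by
        constructor
        · linarith
        · rw [hGfloor x hx, hGfloor x0 hx0] at hlt ⊢
          have h5 : ⌊(F x).toReal⌋ + 1 ≤ ⌊(F x0).toReal⌋ := by exact_mod_cast hlt
          have h6 : ((⌊(F x).toReal⌋ : ℝ)) + 1 ≤ (⌊(F x0).toReal⌋ : ℝ) := by exact_mod_cast h5
          linarith
      obtain ⟨y, hy, hyv⟩ := hoc.out hx' hx0' hmid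
      rw [hGfloor y hy, hGfloor x hx] at hyv
      have h7 : ((⌊(F y).toReal⌋ - ⌊(F x).toReal⌋ : ℤ) : ℝ) = 1/2 := by push_cast; linarith
      exact no_int_in_Ioo01 (by norm_num) (by norm_num) _ h7.symm
    · have hmid : G x0 + 1/2 ∈ Icc (G x0) (G x) := by
        constructor
        · linarith
        · rw [hGfloor x hx, hGfloor x0 hx0] at hlt ⊢
          have h5 : ⌊(F x0).toReal⌋ + 1 ≤ ⌊(F x).toReal⌋ := by exact_mod_cast hlt
          have h6 : ((⌊(F x0).toReal⌋ : ℝ)) + 1 ≤ (⌊(F x).toReal⌋ : ℝ) := by exact_mod_cast h5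
          linarith
      obtain ⟨y, hy, hyv⟩ := hoc.out hx0' hx' hmid
      rw [hGfloor y hy, hGfloor x0 hx0] at hyv
      have h7 : ((⌊(F y).toReal⌋ - ⌊(F x0).toReal⌋ : ℤ) : ℝ) = 1/2 := by push_cast; linarith
      exact no_int_in_Ioo01 (by norm_num) (by norm_num) _ h7.symm
  have h8 := hGfloor x0 hx0
  have h9 : G x = (⌊(F x0).toReal⌋ : ℝ) := by rw [key, h8]
  simp only [hG] at h9
  linarith
set_option maxHeartbeats 2000000 in
/-- **Lemma 3.2.** If `F` is a shift-periodic map with integer spikes and `F_r` is linear on a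
countable family of pairwise disjoint open intervals covering `[0,1]` up to a countable set,
each mapped onto `(0,1)`, then `Y n = φ_F(U, n)` (i.e. `h = id`) is an integer-valued
discrete-time random walk with the stated increment distribution. -/
theorem shift_periodic_piecewise_linear_random_walk
    (F : ℝ → EReal) (k : ℕ) (t : ℕ → ℝ) (hF : ShiftPeriodicSpikes F k t)
    (I : Type) (hI : Countable I) (a b : I → ℝ)
    (hsub : ∀ i, Set.Ioo (a i) (b i) ⊆ Set.Icc (0 : ℝ) 1)
    (hdisj : Pairwise fun i j => Disjoint (Set.Ioo (a i) (b i)) (Set.Ioo (a j) (b j)))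
    (hcov : (Set.Icc (0 : ℝ) 1 \ ⋃ i, Set.Ioo (a i) (b i)).Countable)
    (hlin : ∀ i, ∃ c d : ℝ, ∀ x ∈ Set.Ioo (a i) (b i), restrictedMap F x = c * x + d)
    (himg : ∀ i, restrictedMap F '' Set.Ioo (a i) (b i) = Set.Ioo (0 : ℝ) 1) :
    IsCocycleRandomWalk F id := by
  classical
  set T := restrictedMap F with hT
  choose c d hcd using hlin
  -- Basic facts on each interval
  have key1 : ∀ i, ∀ x ∈ Ioo (a i) (b i), (F x ≠ ⊤ ∧ F x ≠ ⊥) ∧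
      Int.fract (F x).toReal = c i * x + d i ∧ c i * x + d i ∈ Ioo (0:ℝ) 1 := by
    intro i x hx
    have h1 : T x ∈ Ioo (0:ℝ) 1 := by
      rw [← himg i]; exact mem_image_of_mem _ hx
    have h2 := hcd i x hx
    have hni : ¬ (F x = ⊤ ∨ F x = ⊥) := by
      intro h
      rw [hT, restrictedMap, if_pos h] at h1
      exact lt_irrefl 0 h1.1
    refine ⟨not_or.mp hni, ?_, h2 ▸ h1⟩
    rw [hT, restrictedMap, if_neg hni] at h2
    exact h2
  have hc0 : ∀ i, (Ioo (a i) (b i)).Nonempty → c i ≠ 0 := by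
    intro i hne hc
    have h3 : (1:ℝ)/3 ∈ Ioo (0:ℝ) 1 := by norm_num
    have h4 : (1:ℝ)/2 ∈ Ioo (0:ℝ) 1 := by norm_num
    rw [← himg i] at h3 h4
    obtain ⟨x, hx, hxv⟩ := h3
    obtain ⟨y, hy, hyv⟩ := h4
    rw [hcd i x hx, hc, zero_mul, zero_add] at hxv
    rw [hcd i y hy, hc, zero_mul, zero_add] at hyv
    rw [hxv] at hyv; norm_num at hyv
  have hab : ∀ i, (Ioo (a i) (b i)).Nonempty → 0 ≤ a i ∧ b i ≤ 1 := by
    intro i hne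
    have hlt := nonempty_Ioo.mp hne
    constructor
    · by_contra h
      push_neg at h
      set y := (a i + min (b i) 0) / 2 with hy
      have h1 : a i < min (b i) 0 := lt_min hlt h
      have h2 : y ∈ Ioo (a i) (b i) := by
        constructor
        · rw [hy]; linarith [min_le_left (b i) (0:ℝ), min_le_right (b i) (0:ℝ)]
        · have := min_le_left (b i) (0:ℝ); rw [hy]; linarith
      have h3 := (hsub i h2).1
      have h4 : y < 0 := by
        have := min_le_right (b i) (0:ℝ); rw [hy]; linarith
      linarith
    · by_contra h
      push_neg at h
      set y := (max (a i) 1 + b i) / 2 with hy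
      have h1 : max (a i) 1 < b i := max_lt hlt h
      have h2 : y ∈ Ioo (a i) (b i) := by
        constructor
        · have := le_max_left (a i) (1:ℝ); rw [hy]; linarith
        · rw [hy]; linarith
      have h3 := (hsub i h2).2
      have h4 : 1 < y := by
        have := le_max_right (a i) (1:ℝ); rw [hy]; linarith
      linarith
  -- affine map facts
  have haff_im : ∀ i, (fun x => c i * x + d i) '' Ioo (a i) (b i) = Ioo (0:ℝ) 1 := by
    intro i
    rw [← himg i]
    exact (image_congr fun x hx => hcd i x hx).symm
  have hpre : ∀ i, (Ioo (a i) (b i)).Nonempty →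
      (fun x => c i * x + d i) ⁻¹' (Ioo (0:ℝ) 1) = Ioo (a i) (b i) := by
    intro i hne
    apply Subset.antisymm
    · intro y hy
      have : c i * y + d i ∈ (fun x => c i * x + d i) '' Ioo (a i) (b i) := by
        rw [haff_im i]; exact hy
      obtain ⟨x, hx, hxy⟩ := this
      have : x = y := by
        have hc := hc0 i hne
        have h2 : c i * x = c i * y := by simp only at hxy; linarith
        exact mul_left_cancel₀ hc h2
      exact this ▸ hx
    · intro x hx
      have : c i * x + d i ∈ Ioo (0:ℝ) 1 := by
        rw [← haff_im i]; exact mem_image_of_mem _ hx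
      exact this
  have hvol_i : ∀ i, (Ioo (a i) (b i)).Nonempty →
      volume (Ioo (a i) (b i)) = ENNReal.ofReal |(c i)⁻¹| := by
    intro i hne
    rw [← hpre i hne, affine_preimage_volume _ _ (hc0 i hne), Real.volume_Ioo]
    simp
  have hTpre_vol : ∀ i (M : Set ℝ), volume (Ioo (a i) (b i) ∩ T ⁻¹' M)
      = volume (Ioo (a i) (b i)) * volume (M ∩ Ioo 0 1) := by
    intro i M
    rcases Set.eq_empty_or_nonempty (Ioo (a i) (b i)) with he | hne
    · simp [he]
    have h1 : Ioo (a i) (b i) ∩ T ⁻¹' M = (fun x => c i * x + d i) ⁻¹' (Ioo 0 1 ∩ M) := by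
      ext x
      simp only [mem_inter_iff, mem_preimage]
      constructor
      · rintro ⟨hx, hxM⟩
        refine ⟨?_, ?_⟩
        · rw [← haff_im i]; exact mem_image_of_mem _ hx
        · rwa [hcd i x hx] at hxM
      · rintro ⟨h01, hM⟩
        have hx : x ∈ Ioo (a i) (b i) := by rw [← hpre i hne]; exact h01
        exact ⟨hx, by rwa [hcd i x hx]⟩
    rw [h1, affine_preimage_volume _ _ (hc0 i hne), hvol_i i hne, inter_comm]
  -- the floor of F is constant on each interval
  have hfloor : ∀ i, ∃ m : ℤ, ∀ x ∈ Ioo (a i) (b i), ⌊(F x).toReal⌋ = m := by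
    intro i
    rcases Set.eq_empty_or_nonempty (Ioo (a i) (b i)) with he | hne
    · exact ⟨0, fun x hx => absurd hx (he ▸ notMem_empty x)⟩
    have hlt := nonempty_Ioo.mp hne
    obtain ⟨ha0, hb1⟩ := hab i hne
    have hexP : ∃ n, ¬ t n ≤ a i := ⟨k, by rw [hF.tk]; push_neg; linarith⟩
    set j' := Nat.find hexP with hj'
    have hj'pos : j' ≠ 0 := by
      intro h
      apply Nat.find_spec hexP
      rw [← hj', h, hF.t0]
      exact ha0
    set j := j' - 1 with hjdef
    have hjj : j + 1 = j' := by omega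
    have htja : t j ≤ a i := by
      by_contra h
      exact Nat.find_min hexP (show j < j' by omega) h
    have htj1 : a i < t (j + 1) := by
      have := Nat.find_spec hexP
      rw [← hj'] at this
      rw [hjj]
      linarith [not_le.mp this]
    have hj'le : j' ≤ k := Nat.find_min' hexP (by rw [hF.tk]; push_neg; linarith)
    have hjk : j < k := by omega
    have hbt : b i ≤ t (j + 1) := by
      by_contra h
      push_neg at h
      have hτ : t (j + 1) ∈ Ioo (a i) (b i) := ⟨htj1, h⟩
      set l := max (a i) (t j) with hl
      have hlτ : l < t (j + 1) := max_lt htj1 (hF.tmono j hjk)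
      have hJsub1 : Ioo l (t (j + 1)) ⊆ Ioo (a i) (b i) := fun x hx =>
        ⟨lt_of_le_of_lt (le_max_left _ _) hx.1, lt_trans hx.2 h⟩
      have hJsub2 : Ioo l (t (j + 1)) ⊆ Ioo (t j) (t (j + 1)) := fun x hx =>
        ⟨lt_of_le_of_lt (le_max_right _ _) hx.1, hx.2⟩
      obtain ⟨N, hN⟩ := floor_const_on F (c i) (d i) l (t (j + 1))
        ((hF.cont j hjk).mono hJsub2)
        (fun x hx => (key1 i x (hJsub1 hx)).1)
        (fun x hx => (key1 i x (hJsub1 hx)).2.1)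
      obtain ⟨L, hL, hLint⟩ := hF.limL j hjk
      have hLJ : Tendsto F (nhdsWithin (t (j + 1)) (Ioo l (t (j + 1)))) (nhds L) :=
        hL.mono_left (nhdsWithin_mono _ (fun x hx => hx.2))
      have hcoe : Tendsto F (nhdsWithin (t (j + 1)) (Ioo l (t (j + 1))))
          (nhds (((c i * t (j + 1) + d i + N : ℝ)) : EReal)) := by
        have haffc : Tendsto (fun x : ℝ => ((c i * x + d i + N : ℝ) : EReal))
            (nhdsWithin (t (j + 1)) (Ioo l (t (j + 1))))
            (nhds ((c i * t (j + 1) + d i + N : ℝ) : EReal)) := by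
          apply Tendsto.mono_left _ nhdsWithin_le_nhds
          exact (continuous_coe_real_ereal.comp (by continuity)).tendsto' _ _ rfl
        apply haffc.congr'
        filter_upwards [self_mem_nhdsWithin] with x hx
        have hfx := (key1 i x (hJsub1 hx)).1
        rw [← EReal.coe_toReal hfx.1 hfx.2, hN x hx]
      haveI : (nhdsWithin (t (j + 1)) (Ioo l (t (j + 1)))).NeBot :=
        right_nhdsWithin_Ioo_neBot hlτ
      have hLeq : L = ((c i * t (j + 1) + d i + N : ℝ) : EReal) :=
        tendsto_nhds_unique hLJ hcoe
      have hmemτ := (key1 i (t (j + 1)) hτ).2.2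
      rcases hLint with hh | hh | ⟨z, hz⟩
      · rw [hh] at hLeq; exact (EReal.coe_ne_top _) hLeq.symm
      · rw [hh] at hLeq; exact (EReal.coe_ne_bot _) hLeq.symm
      · rw [hz] at hLeq
        have hzz : (z : ℝ) = c i * t (j + 1) + d i + N := by
          exact_mod_cast hLeq
        exact no_int_in_Ioo01 hmemτ.1 hmemτ.2 (z - N) (by push_cast; linarith)
    have hsubpiece : Ioo (a i) (b i) ⊆ Ioo (t j) (t (j + 1)) := fun x hx =>
      ⟨lt_of_le_of_lt htja hx.1, lt_of_lt_of_le hx.2 hbt⟩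
    obtain ⟨N, hN⟩ := floor_const_on F (c i) (d i) (a i) (b i)
      ((hF.cont j hjk).mono hsubpiece)
      (fun x hx => (key1 i x hx).1)
      (fun x hx => (key1 i x hx).2.1)
    refine ⟨N, fun x hx => ?_⟩
    have h1 := hN x hx
    have h2 := (key1 i x hx).2.2
    rw [h1]
    have : ⌊c i * x + d i⌋ = 0 := Int.floor_eq_zero_iff.mpr ⟨h2.1.le, h2.2⟩
    rw [show c i * x + d i + (N:ℝ) = (c i * x + d i) + (N:ℤ) by push_cast; ring,
      Int.floor_add_intCast, this, zero_add]
  choose m hm using hfloor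
  set U := ⋃ i, Ioo (a i) (b i) with hUdef
  have hUsub : U ⊆ Icc (0:ℝ) 1 := iUnion_subset hsub
  have hUmeas : MeasurableSet U := MeasurableSet.iUnion fun i => measurableSet_Ioo
  have hGc : (Icc (0:ℝ) 1 \ U).Countable := hcov
  have hTmem : ∀ x, T x ∈ Icc (0:ℝ) 1 := by
    intro x
    rw [hT, restrictedMap]
    split
    · simp
    · exact ⟨Int.fract_nonneg _, (Int.fract_lt_one _).le⟩
  have hsplit : ∀ x ∈ Icc (0:ℝ) 1, x ∈ U ∨ x ∈ Icc (0:ℝ) 1 \ U := fun x hx =>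
    (em (x ∈ U)).imp id fun h => ⟨hx, h⟩
  have hinj : ∀ i, (Ioo (a i) (b i)).Nonempty →
      Function.Injective (fun x => c i * x + d i) := by
    intro i hne u v huv
    simp only at huv
    have := hc0 i hne
    have h2 : c i * u = c i * v := by linarith
    exact mul_left_cancel₀ this h2
  have hTpre_cnt : ∀ M : Set ℝ, M.Countable → (T ⁻¹' M ∩ Icc (0:ℝ) 1).Countable := by
    intro M hM
    have hss : T ⁻¹' M ∩ Icc (0:ℝ) 1 ⊆ (Icc (0:ℝ) 1 \ U) ∪
        ⋃ i, (Ioo (a i) (b i) ∩ (fun x => c i * x + d i) ⁻¹' M) := by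
      rintro x ⟨hxM, hx01⟩
      rcases hsplit x hx01 with h | h
      · obtain ⟨i, hi⟩ := mem_iUnion.mp h
        right
        exact mem_iUnion.mpr ⟨i, hi, by rw [mem_preimage] at hxM ⊢; rwa [← hcd i x hi]⟩
      · left; exact h
    apply Set.Countable.mono hss
    apply Set.Countable.union hGc
    apply Set.countable_iUnion
    intro i
    rcases Set.eq_empty_or_nonempty (Ioo (a i) (b i)) with he | hne
    · rw [he, empty_inter]; exact countable_empty
    · exact Set.Countable.mono inter_subset_right (hM.preimage (hinj i hne))
  have hTpre_meas : ∀ M : Set ℝ, MeasurableSet M → MeasurableSet (T ⁻¹' M ∩ Icc (0:ℝ) 1) := by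
    intro M hM
    have hdecomp : T ⁻¹' M ∩ Icc (0:ℝ) 1 = (T ⁻¹' M ∩ (Icc (0:ℝ) 1 \ U)) ∪
        ⋃ i, (Ioo (a i) (b i) ∩ (fun x => c i * x + d i) ⁻¹' M) := by
      apply Subset.antisymm
      · rintro x ⟨hxM, hx01⟩
        rcases hsplit x hx01 with h | h
        · obtain ⟨i, hi⟩ := mem_iUnion.mp h
          right
          exact mem_iUnion.mpr ⟨i, hi, by rw [mem_preimage] at hxM ⊢; rwa [← hcd i x hi]⟩
        · left; exact ⟨hxM, h⟩
      · rintro x (⟨h1, h2⟩ | h)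
        · exact ⟨h1, h2.1⟩
        · obtain ⟨i, hi, hpre'⟩ := mem_iUnion.mp h
          refine ⟨?_, hsub i hi⟩
          rw [mem_preimage] at hpre' ⊢
          rwa [hcd i x hi]
      
    rw [hdecomp]
    apply MeasurableSet.union
    · exact (Set.Countable.mono inter_subset_right hGc).measurableSet
    · exact MeasurableSet.iUnion fun i =>
        measurableSet_Ioo.inter (((measurable_id'.const_mul _).add_const _) hM)
  have hiter_meas : ∀ (n : ℕ) (M : Set ℝ), MeasurableSet M →
      MeasurableSet ((T^[n]) ⁻¹' M ∩ Icc (0:ℝ) 1) := by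
    intro n
    induction n with
    | zero => intro M hM; simpa using hM.inter measurableSet_Icc
    | succ n ih =>
      intro M hM
      have h1 : (T^[n+1]) ⁻¹' M ∩ Icc (0:ℝ) 1 =
          T ⁻¹' ((T^[n]) ⁻¹' M ∩ Icc (0:ℝ) 1) ∩ Icc (0:ℝ) 1 := by
        ext x
        simp only [mem_inter_iff, mem_preimage, Function.iterate_succ_apply]
        exact ⟨fun ⟨h, hx⟩ => ⟨⟨h, hTmem x⟩, hx⟩, fun ⟨⟨h, _⟩, hx⟩ => ⟨h, hx⟩⟩
      rw [h1]
      exact hTpre_meas _ (ih M hM)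
  have hiter_cnt : ∀ n : ℕ, ((T^[n]) ⁻¹' Uᶜ ∩ Icc (0:ℝ) 1).Countable := by
    intro n
    induction n with
    | zero =>
      apply Set.Countable.mono ?_ hGc
      intro x hx
      simp only [Function.iterate_zero, preimage_id', mem_inter_iff, mem_compl_iff] at hx
      exact ⟨hx.2, hx.1⟩
    | succ n ih =>
      have h1 : (T^[n+1]) ⁻¹' Uᶜ ∩ Icc (0:ℝ) 1 ⊆
          T ⁻¹' ((T^[n]) ⁻¹' Uᶜ ∩ Icc (0:ℝ) 1) ∩ Icc (0:ℝ) 1 := by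
        rintro x ⟨h, hx⟩
        rw [mem_preimage, Function.iterate_succ_apply] at h
        exact ⟨⟨h, hTmem x⟩, hx⟩
      exact Set.Countable.mono h1 (hTpre_cnt _ ih)
  set Good := Icc (0:ℝ) 1 ∩ ⋂ n : ℕ, (T^[n]) ⁻¹' U with hGooddef
  have hGoodmeas : MeasurableSet Good := by
    have h1 : Good = ⋂ n : ℕ, ((T^[n]) ⁻¹' U ∩ Icc (0:ℝ) 1) := by
      ext x
      simp only [hGooddef, mem_inter_iff, mem_iInter]
      exact ⟨fun h n => ⟨h.2 n, h.1⟩, fun h => ⟨(h 0).2, fun n => (h n).1⟩⟩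
    rw [h1]
    exact MeasurableSet.iInter fun n => hiter_meas n U hUmeas
  have hGoodsub : Good ⊆ Icc (0:ℝ) 1 := inter_subset_left
  have hBadnull : volume (Icc (0:ℝ) 1 \ Good) = 0 := by
    have hss : Icc (0:ℝ) 1 \ Good ⊆ ⋃ n : ℕ, ((T^[n]) ⁻¹' Uᶜ ∩ Icc (0:ℝ) 1) := by
      rintro x ⟨hx, hxg⟩
      simp only [hGooddef, mem_inter_iff, mem_iInter, not_and, not_forall] at hxg
      obtain ⟨n, hn⟩ := hxg hx
      exact mem_iUnion.mpr ⟨n, hn, hx⟩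
    exact measure_mono_null hss ((Set.countable_iUnion hiter_cnt).measure_zero _)
  have hvoleq : ∀ A B : Set ℝ, A ⊆ Icc (0:ℝ) 1 → B ⊆ Icc (0:ℝ) 1 →
      A ∩ Good = B ∩ Good → volume A = volume B := by
    have key : ∀ X Y : Set ℝ, X ⊆ Icc (0:ℝ) 1 → X ∩ Good = Y ∩ Good →
        volume X ≤ volume Y := by
      intro X Y hX hXY
      calc volume X ≤ volume ((Y ∩ Good) ∪ (Icc (0:ℝ) 1 \ Good)) := by
            apply measure_mono
            intro x hx
            by_cases hg : x ∈ Good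
            · left; rw [← hXY]; exact ⟨hx, hg⟩
            · right; exact ⟨hX hx, hg⟩
        _ ≤ volume (Y ∩ Good) + volume (Icc (0:ℝ) 1 \ Good) := measure_union_le _ _
        _ = volume (Y ∩ Good) := by rw [hBadnull, add_zero]
        _ ≤ volume Y := measure_mono inter_subset_left
    exact fun A B hA hB hAB => le_antisymm (key A B hA hAB) (key B A hB hAB.symm)
  have hvolIcc : volume (Icc (0:ℝ) 1) = 1 := by rw [Real.volume_Icc]; norm_num
  have hvolU : volume U = 1 := by
    apply le_antisymm
    · rw [← hvolIcc]; exact measure_mono hUsub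
    · calc (1 : ENNReal) = volume (Icc (0:ℝ) 1) := hvolIcc.symm
        _ ≤ volume U + volume (Icc (0:ℝ) 1 \ U) := by
            refine le_trans (measure_mono ?_) (measure_union_le _ _)
            intro x hx
            exact (em (x ∈ U)).imp id fun h => ⟨hx, h⟩
        _ = volume U := by rw [hGc.measure_zero, add_zero]
  set As : Set ℤ → Set ℝ := fun s => ⋃ i, ⋃ (_ : m i ∈ s), Ioo (a i) (b i) with hAsdef
  have hAs_mem : ∀ (s : Set ℤ) (x : ℝ), x ∈ As s ↔ ∃ i, m i ∈ s ∧ x ∈ Ioo (a i) (b i) := by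
    intro s x
    simp only [hAsdef, mem_iUnion, exists_prop]
  have hAs_meas : ∀ s, MeasurableSet (As s) := fun s =>
    MeasurableSet.iUnion fun i => MeasurableSet.iUnion fun _ => measurableSet_Ioo
  have hAs_subU : ∀ s, As s ⊆ U := by
    intro s x hx
    obtain ⟨i, _, hx'⟩ := (hAs_mem s x).mp hx
    exact mem_iUnion.mpr ⟨i, hx'⟩
  have hAs_univ : As univ = U := by
    apply Subset.antisymm (hAs_subU univ)
    intro x hx
    obtain ⟨i, hi⟩ := mem_iUnion.mp hx
    exact (hAs_mem univ x).mpr ⟨i, trivial, hi⟩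
  have hAs_vol : ∀ s : Set ℤ,
      volume (As s) = ∑' i : {i : I // m i ∈ s}, volume (Ioo (a i.1) (b i.1)) := by
    intro s
    have h1 : As s = ⋃ i : {i : I // m i ∈ s}, Ioo (a i.1) (b i.1) := by
      simp only [hAsdef]
      exact (iUnion_subtype (fun i => m i ∈ s) (fun i => Ioo (a i.1) (b i.1))).symm
    rw [h1]
    exact measure_iUnion
      (fun i j hij => hdisj fun h => hij (Subtype.ext h))
      (fun i => measurableSet_Ioo)
  have hIooT : ∀ i (M : Set ℝ),
      Ioo (a i) (b i) ∩ T ⁻¹' M = Ioo (a i) (b i) ∩ (fun x => c i * x + d i) ⁻¹' M := by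
    intro i M
    ext x
    simp only [mem_inter_iff, mem_preimage]
    exact ⟨fun h => ⟨h.1, by have := h.2; rwa [hcd i x h.1] at this⟩,
      fun h => ⟨h.1, by have := h.2; rwa [← hcd i x h.1] at this⟩⟩
  have hvol01 : ∀ S' : Set ℝ, volume (Icc (0:ℝ) 1 ∩ S') = volume (S' ∩ Ioo 0 1) := by
    intro S'
    apply le_antisymm
    · have h2 : volume ({0, 1} : Set ℝ) = 0 :=
        (Set.countable_insert.mpr (countable_singleton _)).measure_zero _
      refine le_trans (measure_mono ?_) (le_trans (measure_union_le (S' ∩ Ioo 0 1) {0, 1}) ?_)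
      · rintro x ⟨hx1, hx2⟩
        by_cases h : x ∈ Ioo (0:ℝ) 1
        · exact Or.inl ⟨hx2, h⟩
        · right
          simp only [mem_Ioo, not_and_or, not_lt] at h
          rcases h with h | h
          · exact Or.inl (le_antisymm h hx1.1)
          · exact Or.inr (le_antisymm hx1.2 h)
      · rw [h2, add_zero]
    · exact measure_mono fun x hx => ⟨Ioo_subset_Icc_self hx.2, hx.1⟩
  have master : ∀ (n : ℕ) (s : ℕ → Set ℤ) (S : Set ℝ), MeasurableSet S →
      volume (Icc (0:ℝ) 1 ∩ (⋂ j ∈ Finset.range n, (T^[j]) ⁻¹' (As (s j))) ∩ (T^[n]) ⁻¹' S)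
        = (∏ j ∈ Finset.range n, volume (As (s j))) * volume (S ∩ Ioo 0 1) := by
    intro n
    induction n with
    | zero =>
      intro s S hS
      have h1 : Icc (0:ℝ) 1 ∩ (⋂ j ∈ Finset.range 0, (T^[j]) ⁻¹' (As (s j))) ∩ (T^[0]) ⁻¹' S
          = Icc (0:ℝ) 1 ∩ S := by
        ext x
        simp [mem_iInter]
      rw [h1, Finset.range_zero, Finset.prod_empty, one_mul]
      exact hvol01 S
    | succ n ih =>
      intro s S hS
      set E' := (⋂ j ∈ Finset.range n, (T^[j]) ⁻¹' (As (s (j+1)))) ∩ (T^[n]) ⁻¹' S with hE'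
      have hmeasE : MeasurableSet (E' ∩ Icc (0:ℝ) 1) := by
        have h1 : E' ∩ Icc (0:ℝ) 1
            = (⋂ j ∈ Finset.range n, ((T^[j]) ⁻¹' (As (s (j+1))) ∩ Icc (0:ℝ) 1)) ∩
              ((T^[n]) ⁻¹' S ∩ Icc (0:ℝ) 1) := by
          ext x
          simp only [hE', mem_inter_iff, mem_iInter]
          exact ⟨fun h => ⟨fun j hj => ⟨h.1.1 j hj, h.2⟩, h.1.2, h.2⟩,
            fun h => ⟨⟨fun j hj => (h.1 j hj).1, h.2.1⟩, h.2.2⟩⟩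
        rw [h1]
        exact (MeasurableSet.iInter fun j => MeasurableSet.iInter fun _ =>
          hiter_meas j _ (hAs_meas _)).inter (hiter_meas n S hS)
      have hset : Icc (0:ℝ) 1 ∩ (⋂ j ∈ Finset.range (n+1), (T^[j]) ⁻¹' (As (s j))) ∩
            (T^[n+1]) ⁻¹' S
          = ⋃ i : {i : I // m i ∈ s 0}, (Ioo (a i.1) (b i.1) ∩ T ⁻¹' (E' ∩ Icc (0:ℝ) 1)) := by
        ext x
        simp only [hE', mem_inter_iff, mem_iInter, Finset.mem_range, mem_preimage, mem_iUnion]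
        constructor
        · rintro ⟨⟨hx01, hxint⟩, hxS⟩
          have hx0 : x ∈ As (s 0) := by
            have := hxint 0 (Nat.succ_pos n)
            simpa using this
          obtain ⟨i, hi, hxi⟩ := (hAs_mem (s 0) x).mp hx0
          refine ⟨⟨i, hi⟩, hxi, ⟨⟨?_, ?_⟩, hTmem x⟩⟩
          · intro j hj
            have := hxint (j+1) (Nat.succ_lt_succ hj)
            rwa [Function.iterate_succ_apply] at this
          · rw [← Function.iterate_succ_apply]
            exact hxS
        · rintro ⟨⟨i, hi⟩, hxi, ⟨⟨hE1, hE2⟩, _⟩⟩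
          refine ⟨⟨hsub i hxi, ?_⟩, ?_⟩
          · intro j hj
            cases j with
            | zero =>
              simpa using (hAs_mem (s 0) x).mpr ⟨i, hi, hxi⟩
            | succ j =>
              rw [Function.iterate_succ_apply]
              exact hE1 j (Nat.lt_of_succ_lt_succ hj)
          · rw [Function.iterate_succ_apply]
            exact hE2
      have hmeas2 : ∀ i : I, MeasurableSet (Ioo (a i) (b i) ∩ T ⁻¹' (E' ∩ Icc (0:ℝ) 1)) := by
        intro i
        rw [hIooT]
        exact measurableSet_Ioo.inter
          (hmeasE.preimage ((measurable_id'.const_mul _).add_const _))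
      have hmu : volume (⋃ i : {i : I // m i ∈ s 0},
            (Ioo (a i.1) (b i.1) ∩ T ⁻¹' (E' ∩ Icc (0:ℝ) 1)))
          = ∑' i : {i : I // m i ∈ s 0},
              volume (Ioo (a i.1) (b i.1) ∩ T ⁻¹' (E' ∩ Icc (0:ℝ) 1)) :=
        measure_iUnion
          (fun i j hij => Disjoint.mono inter_subset_left inter_subset_left
            (hdisj fun h => hij (Subtype.ext h)))
          (fun i => hmeas2 i.1)
      rw [hset, hmu]
      have hterm : ∀ i : {i : I // m i ∈ s 0},
          volume (Ioo (a i.1) (b i.1) ∩ T ⁻¹' (E' ∩ Icc (0:ℝ) 1))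
            = volume (Ioo (a i.1) (b i.1)) * volume (E' ∩ Icc (0:ℝ) 1 ∩ Ioo 0 1) :=
        fun i => hTpre_vol i.1 _
      rw [tsum_congr hterm, ENNReal.tsum_mul_right, ← hAs_vol (s 0)]
      have hE'vol : volume (E' ∩ Icc (0:ℝ) 1 ∩ Ioo 0 1)
          = (∏ j ∈ Finset.range n, volume (As (s (j+1)))) * volume (S ∩ Ioo 0 1) := by
        have h3 : volume (E' ∩ Icc (0:ℝ) 1 ∩ Ioo 0 1) = volume (Icc (0:ℝ) 1 ∩ (E' ∩ Icc (0:ℝ) 1)) :=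
          (hvol01 (E' ∩ Icc (0:ℝ) 1)).symm
        have h4 : Icc (0:ℝ) 1 ∩ (E' ∩ Icc (0:ℝ) 1)
            = Icc (0:ℝ) 1 ∩ (⋂ j ∈ Finset.range n, (T^[j]) ⁻¹' (As (s (j+1)))) ∩ (T^[n]) ⁻¹' S := by
          ext x
          simp only [hE', mem_inter_iff, mem_iInter]
          exact ⟨fun h => ⟨⟨h.1, fun j hj => (h.2.1).1 j hj⟩, (h.2.1).2⟩,
            fun h => ⟨h.1.1, ⟨⟨fun j hj => h.1.2 j hj, h.2⟩, h.1.1⟩⟩⟩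
        rw [h3, h4]
        exact ih (fun j => s (j+1)) S hS
      rw [hE'vol, Finset.prod_range_succ']
      ring
  -- facts about the cocycle on the good set
  have hfinU : ∀ y ∈ U, F y ≠ ⊤ ∧ F y ≠ ⊥ := by
    intro y hy
    obtain ⟨i, hi⟩ := mem_iUnion.mp hy
    exact (key1 i y hi).1
  have hGoodU : ∀ x ∈ Good, ∀ n : ℕ, T^[n] x ∈ U := by
    intro x hx n
    have := mem_iInter.mp hx.2 n
    exact this
  have hZval : ∀ x ∈ Good, ∀ n : ℕ,
      cocycle F x n = ∑ j ∈ Finset.range n, ⌊(F (T^[j] x)).toReal⌋ := by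
    intro x hx n
    have hcnd : ∀ j < n, F ((restrictedMap F)^[j] x) ≠ ⊤ ∧ F ((restrictedMap F)^[j] x) ≠ ⊥ := by
      intro j _
      exact hfinU _ (hGoodU x hx j)
    rw [cocycle, if_pos hcnd]
  have hZ : ∀ x ∈ Good, ∀ n : ℕ,
      cocycle F x (n+1) - cocycle F x n = ⌊(F (T^[n] x)).toReal⌋ := by
    intro x hx n
    rw [hZval x hx, hZval x hx, Finset.sum_range_succ]
    ring
  have hZm : ∀ x ∈ Good, ∀ (n : ℕ) (s : Set ℤ),
      (cocycle F x (n+1) - cocycle F x n ∈ s ↔ T^[n] x ∈ As s) := by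
    intro x hx n s
    rw [hZ x hx n]
    constructor
    · intro h
      obtain ⟨i, hi⟩ := mem_iUnion.mp (hGoodU x hx n)
      rw [hm i _ hi] at h
      exact (hAs_mem s _).mpr ⟨i, h, hi⟩
    · intro h
      obtain ⟨i, his, hi⟩ := (hAs_mem s _).mp h
      rw [hm i _ hi]
      exact his
  -- the main event computation
  have hEV : ∀ (S : Finset ℕ) (s : ℕ → Set ℤ),
      volume ((⋂ j ∈ S, (fun x => cocycle F x (j+1) - cocycle F x j) ⁻¹' (s j)) ∩ Icc (0:ℝ) 1)
        = ∏ j ∈ S, volume (As (s j)) := by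
    intro S s
    set N := S.sup id + 1 with hN
    have hjN : ∀ j ∈ S, j < N := by
      intro j hj
      have h9 : j ≤ S.sup id := Finset.le_sup (f := id) hj
      omega
    set s' : ℕ → Set ℤ := fun j => if j ∈ S then s j else univ with hs'
    have hAB : ((⋂ j ∈ S, (fun x => cocycle F x (j+1) - cocycle F x j) ⁻¹' (s j)) ∩ Icc (0:ℝ) 1)
          ∩ Good
        = (Icc (0:ℝ) 1 ∩ (⋂ j ∈ Finset.range N, (T^[j]) ⁻¹' (As (s' j))) ∩ (T^[N]) ⁻¹' univ)
          ∩ Good := by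
      ext x
      simp only [mem_inter_iff, mem_iInter, mem_preimage, Finset.mem_range, mem_univ, and_true]
      constructor
      · rintro ⟨⟨hxint, hx01⟩, hg⟩
        refine ⟨⟨hx01, fun j _ => ?_⟩, hg⟩
        by_cases hjS : j ∈ S
        · rw [hs']
          simp only [if_pos hjS]
          exact (hZm x hg j (s j)).mp (hxint j hjS)
        · rw [hs']
          simp only [if_neg hjS]
          rw [hAs_univ]
          exact hGoodU x hg j
      · rintro ⟨⟨hx01, hxint⟩, hg⟩
        refine ⟨⟨fun j hjS => ?_, hx01⟩, hg⟩
        have := hxint j (hjN j hjS)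
        rw [hs'] at this
        simp only [if_pos hjS] at this
        exact (hZm x hg j (s j)).mpr this
    have hBsub : Icc (0:ℝ) 1 ∩ (⋂ j ∈ Finset.range N, (T^[j]) ⁻¹' (As (s' j))) ∩ (T^[N]) ⁻¹' univ
        ⊆ Icc (0:ℝ) 1 := fun x hx => hx.1.1
    have h1 := hvoleq _ _ inter_subset_right hBsub hAB
    rw [h1, master N s' univ MeasurableSet.univ]
    rw [univ_inter, Real.volume_Ioo]
    simp only [sub_zero, ENNReal.ofReal_one, mul_one]
    rw [← Finset.prod_subset (fun j hj => Finset.mem_range.mpr (hjN j hj))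
      (fun j _ hjS => by
        rw [hs']
        simp only [if_neg hjS]
        rw [hAs_univ, hvolU])]
    apply Finset.prod_congr rfl
    intro j hj
    rw [hs']
    simp only [if_pos hj]
  have hsingle : ∀ (n : ℕ) (s : Set ℤ),
      volume ((fun x => cocycle F x (n+1) - cocycle F x n) ⁻¹' s ∩ Icc (0:ℝ) 1)
        = volume (As s) := by
    intro n s
    have := hEV {n} (fun _ => s)
    simpa using this
  -- measurability of the increments
  have hBadcnt : (Icc (0:ℝ) 1 \ Good).Countable := by
    apply Set.Countable.mono ?_ (Set.countable_iUnion hiter_cnt)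
    rintro x ⟨hx, hxg⟩
    simp only [hGooddef, mem_inter_iff, mem_iInter, not_and, not_forall] at hxg
    obtain ⟨n, hn⟩ := hxg hx
    exact mem_iUnion.mpr ⟨n, hn, hx⟩
  have hZmeasset : ∀ (n : ℕ) (s : Set ℤ),
      MeasurableSet ((fun x => cocycle F x (n+1) - cocycle F x n) ⁻¹' s ∩ Icc (0:ℝ) 1) := by
    intro n s
    have hdec : (fun x => cocycle F x (n+1) - cocycle F x n) ⁻¹' s ∩ Icc (0:ℝ) 1
        = (((T^[n]) ⁻¹' (As s) ∩ Icc (0:ℝ) 1) ∩ Good) ∪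
          ((fun x => cocycle F x (n+1) - cocycle F x n) ⁻¹' s ∩ (Icc (0:ℝ) 1 \ Good)) := by
      ext x
      constructor
      · rintro ⟨hxs, hx01⟩
        by_cases hg : x ∈ Good
        · exact Or.inl ⟨⟨(hZm x hg n s).mp hxs, hx01⟩, hg⟩
        · exact Or.inr ⟨hxs, hx01, hg⟩
      · rintro (⟨⟨hxs, hx01⟩, hg⟩ | ⟨hxs, hx01, _⟩)
        · exact ⟨(hZm x hg n s).mpr hxs, hx01⟩
        · exact ⟨hxs, hx01⟩
    rw [hdec]
    exact ((hiter_meas n _ (hAs_meas s)).inter hGoodmeas).union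
      (Set.Countable.mono inter_subset_right hBadcnt).measurableSet
  have haem : ∀ n : ℕ, AEMeasurable (fun x => cocycle F x (n+1) - cocycle F x n)
      (volume.restrict (Icc (0:ℝ) 1)) := by
    intro n
    refine ⟨fun x => if x ∈ Icc (0:ℝ) 1 then cocycle F x (n+1) - cocycle F x n else 0, ?_, ?_⟩
    · apply measurable_to_countable'
      intro v
      have hpre2 : (fun x => if x ∈ Icc (0:ℝ) 1 then cocycle F x (n+1) - cocycle F x n else 0)
            ⁻¹' {v}
          = ((fun x => cocycle F x (n+1) - cocycle F x n) ⁻¹' {v} ∩ Icc (0:ℝ) 1) ∪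
            (if (0:ℤ) = v then (Icc (0:ℝ) 1)ᶜ else ∅) := by
        ext x
        simp only [mem_preimage, mem_singleton_iff, mem_union, mem_inter_iff, mem_compl_iff]
        by_cases hx : x ∈ Icc (0:ℝ) 1 <;> by_cases hv : (0:ℤ) = v <;>
          simp [hx, hv]
      rw [hpre2]
      apply (hZmeasset n {v}).union
      split
      · exact measurableSet_Icc.compl
      · exact MeasurableSet.empty
    · filter_upwards [ae_restrict_mem measurableSet_Icc] with x hx
      simp [hx]
  -- conclusion
  refine ⟨?_, ?_, ?_⟩
  · show iIndepFun (fun (n : ℕ) (x : ℝ) => cocycle F x (n+1) - cocycle F x n) _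
    rw [ProbabilityTheory.iIndepFun_iff_measure_inter_preimage_eq_mul]
    intro S sets _
    rw [Measure.restrict_apply' measurableSet_Icc]
    have h1 : (⋂ j ∈ S, (fun x => cocycle F x (j+1) - cocycle F x j) ⁻¹' (sets j)) ∩ Icc (0:ℝ) 1
        = (⋂ j ∈ S, (fun x => cocycle F x (j+1) - cocycle F x j) ⁻¹' (sets j)) ∩ Icc (0:ℝ) 1 :=
      rfl
    rw [hEV S sets]
    apply Finset.prod_congr rfl
    intro j _
    rw [Measure.restrict_apply' measurableSet_Icc, hsingle j (sets j)]
  · intro n m'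
    refine ⟨haem n, haem m', ?_⟩
    apply Measure.ext
    intro s hs
    simp only [id_eq]
    rw [Measure.map_apply_of_aemeasurable (haem n) hs,
      Measure.map_apply_of_aemeasurable (haem m') hs,
      Measure.restrict_apply' measurableSet_Icc,
      Measure.restrict_apply' measurableSet_Icc,
      hsingle n s, hsingle m' s]
  · intro n mm
    have hc00 : ∀ x : ℝ, cocycle F x 0 = 0 := by
      intro x
      rw [cocycle]
      split <;> simp
    rw [Measure.restrict_apply' measurableSet_Icc]
    have h1 : {x | cocycle F (id x) (n+1) - cocycle F (id x) n = mm} ∩ Icc (0:ℝ) 1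
        = (fun x => cocycle F x (n+1) - cocycle F x n) ⁻¹' {mm} ∩ Icc (0:ℝ) 1 := rfl
    rw [h1, hsingle n {mm}]
    have h2 : {x ∈ Icc (0:ℝ) 1 | cocycle F (id x) 1 = mm}
        = (fun x => cocycle F x (0+1) - cocycle F x 0) ⁻¹' {mm} ∩ Icc (0:ℝ) 1 := by
      ext x
      simp only [mem_setOf_eq, mem_inter_iff, mem_preimage, mem_singleton_iff, id_eq, hc00,
        sub_zero, zero_add]
      exact ⟨fun h => ⟨h.2, h.1⟩, fun h => ⟨h.2, h.1⟩⟩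
    rw [h2, hsingle 0 {mm}]
end

section
/- Let F be a shift-periodic map with integer spikes and let U be uniformly distributed on [0,1]. Let (a_i, b_i), i ∈ I, be pairwise disjoint open intervals such that F_r is monotone on each (a_i, b_i) with F_r((a_i, b_i)) = (0,1), and [0,1] ∖ ⋃_{i∈I} (a_i, b_i) is countable. Suppose μ is an absolutely continuous F_r-invariant probability measure on [0,1] such that the map x ↦ μ([0,x]) is strictly increasing on [0,1], and let h be the inverse of x ↦ μ([0,x]). Suppose further that h^{−1} ∘ F_r ∘ h is linear on each interval h^{−1}((a_i, b_i)), i ∈ I. Then, setting Y_0 = 0 and Y_n = φ_F(h(U), n), the process (Y_n)_{n≥0} is a discrete-time random walk, and for every m ∈ ℤ, P(Y_n − Y_{n−1} = m) = λ({x ∈ [0,1] : φ_F(h(x), 1) = m}), where λ denotes Lebesgue measure. -/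
open MeasureTheory ProbabilityTheory Set Filter
open scoped ENNReal

section helpers

lemma ivt_floor_const {f : ℝ → ℝ} {s : Set ℝ} (hs : s.OrdConnected) (hf : ContinuousOn f s)
    (hni : ∀ x ∈ s, ∀ z : ℤ, f x ≠ z) {x y : ℝ} (hx : x ∈ s) (hy : y ∈ s) : ⌊f x⌋ = ⌊f y⌋ := by
  have key : ∀ u v : ℝ, u ∈ s → v ∈ s → u ≤ v → ⌊f u⌋ = ⌊f v⌋ := by
    intro u v hu hv huv
    by_contra hne
    have hsub : Icc u v ⊆ s := hs.out hu hv
    have hfc : ContinuousOn f (Icc u v) := hf.mono hsub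
    rcases lt_or_gt_of_ne hne with hlt | hlt
    · have h1 : f u < (⌊f v⌋ : ℝ) := by
        have := Int.lt_floor_add_one (f u)
        have h2 : (⌊f u⌋ : ℝ) + 1 ≤ (⌊f v⌋ : ℝ) := by exact_mod_cast hlt
        linarith
      have h2 : (⌊f v⌋ : ℝ) ≤ f v := Int.floor_le _
      obtain ⟨c, hc, hfc'⟩ := intermediate_value_Icc huv hfc ⟨h1.le, h2⟩
      exact hni c (hsub hc) _ hfc'
    · have h1 : f v < (⌊f u⌋ : ℝ) := by
        have := Int.lt_floor_add_one (f v)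
        have h2 : (⌊f v⌋ : ℝ) + 1 ≤ (⌊f u⌋ : ℝ) := by exact_mod_cast hlt
        linarith
      have h2 : (⌊f u⌋ : ℝ) ≤ f u := Int.floor_le _
      obtain ⟨c, hc, hfc'⟩ := intermediate_value_Icc' huv hfc ⟨h1.le, h2⟩
      exact hni c (hsub hc) _ hfc'
  rcases le_total x y with hxy | hxy
  · exact key x y hx hy hxy
  · exact (key y x hy hx hxy).symm

lemma branch_const (F : ℝ → EReal) (k : ℕ) (t : ℕ → ℝ) (hF : ShiftPeriodicSpikes F k t)
    (a b : ℝ) (hsub : Ioo a b ⊆ Icc (0:ℝ) 1)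
    (hmono : StrictMonoOn (restrictedMap F) (Ioo a b) ∨ StrictAntiOn (restrictedMap F) (Ioo a b))
    (himg : restrictedMap F '' Ioo a b = Ioo (0:ℝ) 1) :
    ∃ j, j < k ∧ Ioo a b ⊆ Ioo (t j) (t (j+1)) ∧
      ∃ m : ℤ, ∀ x ∈ Ioo a b, (F x ≠ ⊤ ∧ F x ≠ ⊥) ∧ ⌊(F x).toReal⌋ = m := by
  set T := restrictedMap F with hT_def
  have hT : ∀ x ∈ Ioo a b, T x ∈ Ioo (0:ℝ) 1 := fun x hx => himg ▸ mem_image_of_mem _ hx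
  have hfin : ∀ x ∈ Ioo a b, F x ≠ ⊤ ∧ F x ≠ ⊥ := by
    intro x hx
    by_contra hc
    have : F x = ⊤ ∨ F x = ⊥ := by tauto
    have h0 : T x = 0 := by simp [hT_def, restrictedMap, this]
    have h1 := (hT x hx).1
    rw [h0] at h1
    exact lt_irrefl _ h1
  have hTeq : ∀ x ∈ Ioo a b, T x = Int.fract (F x).toReal := by
    intro x hx
    simp only [hT_def, restrictedMap, if_neg (not_or.mpr (hfin x hx))]
  have hnotint : ∀ x ∈ Ioo a b, ∀ z : ℤ, (F x).toReal ≠ z := by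
    intro x hx z hz
    have := (hT x hx).1
    rw [hTeq x hx, hz, Int.fract_intCast] at this
    exact lt_irrefl _ this
  have hFcoe : ∀ x ∈ Ioo a b, F x = (((F x).toReal : ℝ) : EReal) := by
    intro x hx
    exact (EReal.coe_toReal (hfin x hx).1 (hfin x hx).2).symm
  have hab : a < b := by
    by_contra hab
    have : Ioo a b = ∅ := Ioo_eq_empty (by linarith [not_lt.mp hab])
    rw [this, image_empty] at himg
    exact absurd himg.symm (by simp [Set.eq_empty_iff_forall_notMem]; exact ⟨1/2, by norm_num⟩)
  have tlt : ∀ p q, p < q → q ≤ k → t p < t q := by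
    intro p q hpq hqk
    induction q with
    | zero => omega
    | succ n ih =>
      rcases Nat.lt_succ_iff_lt_or_eq.mp hpq with hc | hc
      · exact (ih hc (by omega)).trans (hF.tmono n (by omega))
      · subst hc; exact hF.tmono p (by omega)
  -- no break point in the interior
  have hnot : ∀ j, j ≤ k → t j ∉ Ioo a b := by
    intro j hjk htj
    -- j = 0 and j = k are easy
    rcases Nat.eq_zero_or_pos j with rfl | hj0
    · rw [hF.t0] at htj
      have : a / 2 ∈ Ioo a b := ⟨by linarith [htj.1], by linarith [htj.1, htj.2]⟩
      linarith [(hsub this).1, htj.1]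
    rcases eq_or_lt_of_le hjk with rfl | hjk'
    · rw [hF.tk] at htj
      have : (1 + b) / 2 ∈ Ioo a b := ⟨by linarith [htj.1, htj.2], by linarith [htj.2]⟩
      linarith [(hsub this).2, htj.2]
    -- main case : 0 < j < k
    have hj1 : j - 1 + 1 = j := Nat.succ_pred_eq_of_pos hj0
    have htm : t (j-1) < t j := by
      have := hF.tmono (j-1) (by omega)
      rwa [hj1] at this
    set c := max a (t (j-1)) with hc_def
    have hc : c < t j := max_lt htj.1 htm
    set L := Ioo c (t j) with hL_def
    have hL1 : L ⊆ Ioo a b := fun x hx =>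
      ⟨lt_of_le_of_lt (le_max_left _ _) hx.1, hx.2.trans htj.2⟩
    have hL2 : L ⊆ Ioo (t (j-1)) (t ((j-1)+1)) := by
      rw [hj1]; exact fun x hx => ⟨lt_of_le_of_lt (le_max_right _ _) hx.1, hx.2⟩
    have hcF : ContinuousOn F L := (hF.cont (j-1) (by omega)).mono hL2
    have hcf : ContinuousOn (fun x => (F x).toReal) L := by
      apply EReal.continuousOn_toReal.comp hcF
      intro x hx
      simp only [Set.mem_compl_iff, Set.mem_insert_iff, Set.mem_singleton_iff]
      push_neg
      exact ⟨(hfin x (hL1 hx)).2, (hfin x (hL1 hx)).1⟩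
    have hx1 : (c + t j)/2 ∈ L := ⟨by linarith, by linarith⟩
    set x₁ := (c + t j)/2 with hx1_def
    set m₀ := ⌊(F x₁).toReal⌋ with hm0_def
    have hfl : ∀ x ∈ L, ⌊(F x).toReal⌋ = m₀ := fun x hx =>
      ivt_floor_const Set.ordConnected_Ioo hcf (fun z hz w => hnotint z (hL1 hz) w) hx hx1
    have hfm : ∀ x ∈ L, (F x).toReal ∈ Ioo (m₀:ℝ) ((m₀:ℝ)+1) := by
      intro x hx
      have h1 := hfl x hx
      constructor
      · rcases lt_or_eq_of_le (by exact_mod_cast h1 ▸ Int.floor_le (F x).toReal :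
          (m₀:ℝ) ≤ (F x).toReal) with hlt | heq
        · exact hlt
        · exact absurd heq.symm (hnotint x (hL1 hx) m₀)
      · have h2 := Int.lt_floor_add_one (F x).toReal
        rw [h1] at h2
        exact_mod_cast h2
    obtain ⟨Lv, hLv0, hLvint⟩ := hF.limL (j-1) (by omega)
    have hLv : Tendsto F (nhdsWithin (t j) (Iio (t j))) (nhds Lv) := by rwa [hj1] at hLv0
    have hmemL : L ∈ nhdsWithin (t j) (Iio (t j)) := Ioo_mem_nhdsLT_of_mem ⟨hc, le_refl _⟩
    haveI : (nhdsWithin (t j) (Iio (t j))).NeBot := nhdsWithin_Iio_self_neBot' ⟨c, hc⟩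
    have hev : ∀ᶠ x in nhdsWithin (t j) (Iio (t j)), x ∈ L := hmemL
    have hub1 : ((m₀:ℝ) : EReal) ≤ Lv := by
      refine ge_of_tendsto hLv (hev.mono fun x hx => ?_)
      rw [hFcoe x (hL1 hx)]
      exact_mod_cast (hfm x hx).1.le
    have hub2 : Lv ≤ (((m₀:ℝ)+1 : ℝ) : EReal) := by
      refine le_of_tendsto hLv (hev.mono fun x hx => ?_)
      rw [hFcoe x (hL1 hx)]
      exact_mod_cast (hfm x hx).2.le
    have hLvne1 : Lv ≠ ⊤ := by
      intro hcon; rw [hcon] at hub2; exact absurd (top_le_iff.mp hub2) (EReal.coe_ne_top _)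
    have hLvne2 : Lv ≠ ⊥ := by
      intro hcon; rw [hcon] at hub1; exact absurd (le_bot_iff.mp hub1) (EReal.coe_ne_bot _)
    obtain ⟨m, hm⟩ : ∃ m : ℤ, Lv = ((m : ℝ) : EReal) := by
      rcases hLvint with hcon | hcon | hok
      · exact absurd hcon hLvne1
      · exact absurd hcon hLvne2
      · exact hok
    have hmrange : m = m₀ ∨ m = m₀ + 1 := by
      rw [hm] at hub1 hub2
      have h1 : (m₀:ℝ) ≤ (m:ℝ) := by exact_mod_cast hub1
      have h2 : (m:ℝ) ≤ (m₀:ℝ)+1 := by exact_mod_cast hub2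
      have h1' : m₀ ≤ m := by exact_mod_cast h1
      have h2' : m ≤ m₀ + 1 := by exact_mod_cast h2
      omega
    have hf_t : Tendsto (fun x => (F x).toReal) (nhdsWithin (t j) (Iio (t j))) (nhds (m:ℝ)) := by
      have h0 : Tendsto EReal.toReal (nhds Lv) (nhds Lv.toReal) :=
        EReal.tendsto_toReal hLvne1 hLvne2
      have h1 := h0.comp hLv
      rw [hm] at h1
      simpa [Function.comp_def] using h1
    have hTlim : Tendsto T (nhdsWithin (t j) (Iio (t j))) (nhds ((m:ℝ) - (m₀:ℝ))) := by
      refine Filter.Tendsto.congr' (hev.mono fun x hx => ?_) (hf_t.sub_const (m₀:ℝ))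
      rw [hTeq x (hL1 hx)]
      rw [Int.fract, hfl x hx]
    have hy : (t j + b)/2 ∈ Ioo a b := ⟨by linarith [htj.1], by linarith [htj.2]⟩
    set y := (t j + b)/2 with hy_def
    have hyt : t j < y := by
      simp only [hy_def]; linarith [htj.2]
    have hmem2 : Ioo x₁ (t j) ∈ nhdsWithin (t j) (Iio (t j)) :=
      Ioo_mem_nhdsLT_of_mem ⟨hx1.2, le_refl _⟩
    have hev2 : ∀ᶠ x in nhdsWithin (t j) (Iio (t j)), x ∈ Ioo x₁ (t j) := hmem2
    have hsubL : Ioo x₁ (t j) ⊆ L := fun x hx => ⟨hx1.1.trans hx.1, hx.2⟩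
    rcases hmono with hmo | han
    · rcases hmrange with hmm | hmm
      · -- limit 0, increasing : T x₁ ≤ 0, contradiction
        have : T x₁ ≤ (m:ℝ) - (m₀:ℝ) := by
          refine ge_of_tendsto hTlim (hev2.mono fun x hx => ?_)
          exact (hmo (hL1 hx1) (hL1 (hsubL hx)) hx.1).le
        rw [hmm] at this
        simp at this
        linarith [(hT x₁ (hL1 hx1)).1]
      · -- limit 1, increasing : 1 ≤ T y, contradiction
        have : (m:ℝ) - (m₀:ℝ) ≤ T y := by
          refine le_of_tendsto hTlim (hev.mono fun x hx => ?_)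
          exact (hmo (hL1 hx) hy (hx.2.trans hyt)).le
        rw [hmm] at this
        push_cast at this
        linarith [(hT y hy).2]
    · rcases hmrange with hmm | hmm
      · -- limit 0, decreasing : T y ≤ 0, contradiction
        have : T y ≤ (m:ℝ) - (m₀:ℝ) := by
          refine ge_of_tendsto hTlim (hev.mono fun x hx => ?_)
          exact (han (hL1 hx) hy (hx.2.trans hyt)).le
        rw [hmm] at this
        simp at this
        linarith [(hT y hy).1]
      · -- limit 1, decreasing : 1 ≤ T x₁, contradiction
        have : (m:ℝ) - (m₀:ℝ) ≤ T x₁ := by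
          refine le_of_tendsto hTlim (hev2.mono fun x hx => ?_)
          exact (han (hL1 hx1) (hL1 (hsubL hx)) hx.1).le
        rw [hmm] at this
        push_cast at this
        linarith [(hT x₁ (hL1 hx1)).2]
  -- locate the branch inside one continuity interval
  have hx0b : (a + b) / 2 ∈ Ioo a b := ⟨by linarith, by linarith⟩
  set x₀ := (a + b) / 2 with hx0_def
  have hx0pos : 0 < x₀ := by
    rcases lt_or_eq_of_le (hsub hx0b).1 with hgt | heq
    · exact hgt
    · exfalso; exact hnot 0 (by omega) (by rw [hF.t0, heq]; exact hx0b)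
  have hx0le : x₀ ≤ 1 := (hsub hx0b).2
  set P := fun i => t i < x₀ with hP_def
  have hP0 : P 0 := by rw [hP_def]; simp [hF.t0, hx0pos]
  set j := Nat.findGreatest P k with hj_def
  have hPj : P j := Nat.findGreatest_spec (Nat.zero_le k) hP0
  have hjle : j ≤ k := Nat.findGreatest_le k
  have hjk : j < k := by
    refine lt_of_le_of_ne hjle (fun hc => ?_)
    rw [hP_def] at hPj
    simp only [hc, hF.tk] at hPj
    linarith
  have hnext : x₀ < t (j + 1) := by
    have h1 : ¬ P (j + 1) := Nat.findGreatest_is_greatest (Nat.lt_succ_self _) hjk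
    rcases lt_or_eq_of_le (not_lt.mp h1) with h | h
    · exact h
    · exfalso; exact hnot (j+1) (by omega) (h ▸ hx0b)
  have hBsub : Ioo a b ⊆ Ioo (t j) (t (j+1)) := by
    intro y hy
    constructor
    · by_contra hc
      exact hnot j (by omega)
        ((Set.ordConnected_Ioo.out hy hx0b) ⟨not_lt.mp hc, hPj.le⟩)
    · by_contra hc
      exact hnot (j+1) (by omega)
        ((Set.ordConnected_Ioo.out hx0b hy) ⟨hnext.le, not_lt.mp hc⟩)
  -- conclude with the IVT gap lemma
  have hcF : ContinuousOn F (Ioo a b) := (hF.cont j hjk).mono hBsub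
  have hcf : ContinuousOn (fun x => (F x).toReal) (Ioo a b) := by
    apply EReal.continuousOn_toReal.comp hcF
    intro x hx
    simp only [Set.mem_compl_iff, Set.mem_insert_iff, Set.mem_singleton_iff]
    push_neg
    exact ⟨(hfin x hx).2, (hfin x hx).1⟩
  have := ivt_floor_const Set.ordConnected_Ioo hcf hnotint (x := x₀) (y := x₀) hx0b hx0b
  refine ⟨j, hjk, hBsub, ⌊(F x₀).toReal⌋, fun x hx => ⟨hfin x hx, ?_⟩⟩
  exact ivt_floor_const Set.ordConnected_Ioo hcf hnotint hx hx0b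

lemma branch_union_mul {ι : Type} [Countable ι] (ν : Measure ℝ)
    (T' : ℝ → ℝ) (hT' : Measurable T') (C : ι → Set ℝ) (hCm : ∀ i, MeasurableSet (C i))
    (hCd : Pairwise fun i j => Disjoint (C i) (C j))
    (hkey : ∀ i, ∀ D : Set ℝ, MeasurableSet D → ν (C i ∩ T' ⁻¹' D) = ν (C i) * ν D)
    (E : Set ι) (D : Set ℝ) (hD : MeasurableSet D) :
    ν ((⋃ i ∈ E, C i) ∩ T' ⁻¹' D) = ν (⋃ i ∈ E, C i) * ν D := by
  have h1 : (⋃ i ∈ E, C i) ∩ T' ⁻¹' D = ⋃ (i : E), (C i ∩ T' ⁻¹' D) := by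
    rw [Set.biUnion_eq_iUnion, Set.iUnion_inter]
  have h2 : (⋃ i ∈ E, C i) = ⋃ (i : E), C i := Set.biUnion_eq_iUnion _ _
  have hd1 : Pairwise (Function.onFun Disjoint fun i : E => C i ∩ T' ⁻¹' D) := by
    intro i j hij
    exact (hCd (Subtype.coe_ne_coe.mpr hij)).mono inter_subset_left inter_subset_left
  have hd2 : Pairwise (Function.onFun Disjoint fun i : E => C i) := fun i j hij =>
    hCd (Subtype.coe_ne_coe.mpr hij)
  rw [h1, h2, measure_iUnion hd1 (fun i => (hCm i).inter (hT' hD)),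
    measure_iUnion hd2 (fun i => hCm i)]
  rw [← ENNReal.tsum_mul_right]
  exact tsum_congr fun i => hkey i D hD

lemma branch_indep_iter {ι : Type} [Countable ι] (ν : Measure ℝ) [IsProbabilityMeasure ν]
    (T' : ℝ → ℝ) (hT' : Measurable T') (C : ι → Set ℝ) (hCm : ∀ i, MeasurableSet (C i))
    (hCd : Pairwise fun i j => Disjoint (C i) (C j))
    (hkey : ∀ i, ∀ D : Set ℝ, MeasurableSet D → ν (C i ∩ T' ⁻¹' D) = ν (C i) * ν D)
    (N : ℕ) (E : ℕ → Set ι) :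
    ν (⋂ r ∈ Finset.range N, T'^[r] ⁻¹' (⋃ i ∈ E r, C i)) =
      ∏ r ∈ Finset.range N, ν (⋃ i ∈ E r, C i) := by
  induction N generalizing E with
  | zero => simp
  | succ n ih =>
    have hmeasU : ∀ (E' : Set ι), MeasurableSet (⋃ i ∈ E', C i) := by
      intro E'
      rw [Set.biUnion_eq_iUnion]
      exact MeasurableSet.iUnion (fun i => hCm i)
    have hsplit : (⋂ r ∈ Finset.range (n+1), T'^[r] ⁻¹' (⋃ i ∈ E r, C i)) =
        (⋃ i ∈ E 0, C i) ∩ T' ⁻¹' (⋂ r ∈ Finset.range n, T'^[r] ⁻¹' (⋃ i ∈ E (r+1), C i)) := by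
      ext x
      simp only [Set.mem_iInter, Set.mem_inter_iff, Set.mem_preimage, Finset.mem_range]
      constructor
      · intro hx
        refine ⟨by simpa using hx 0 (by omega), fun r hr => ?_⟩
        have := hx (r+1) (by omega)
        rwa [Function.iterate_succ_apply] at this
      · rintro ⟨h0, hrest⟩ r hr
        match r with
        | 0 => simpa using h0
        | (r+1) =>
          rw [Function.iterate_succ_apply]
          exact hrest r (by omega)
    have hDmeas : MeasurableSet (⋂ r ∈ Finset.range n, T'^[r] ⁻¹' (⋃ i ∈ E (r+1), C i)) := by
      refine MeasurableSet.biInter (Finset.countable_toSet _) (fun r _ => ?_)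
      exact (hmeasU _).preimage (hT'.iterate r)
    rw [hsplit, branch_union_mul ν T' hT' C hCm hCd hkey _ _ hDmeas, ih (fun r => E (r+1)),
      Finset.prod_range_succ']
    ring

lemma volume_preimage_affine {c d : ℝ} (hc : c ≠ 0) (V : Set ℝ) :
    volume ((fun u => c*u + d) ⁻¹' V) = ENNReal.ofReal |c⁻¹| * volume V := by
  have : (fun u => c*u + d) = (fun y => y + d) ∘ (fun u => c*u) := rfl
  rw [this, Set.preimage_comp]
  rw [Real.volume_preimage_mul_left hc]
  congr 1
  exact measure_preimage_add_right volume d V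

/-- measures agree on sets whose symmetric difference is contained in a null set -/
lemma measure_eq_of_diff_null {ν : Measure ℝ} {A B N : Set ℝ} (hN : ν N = 0)
    (h1 : A \ B ⊆ N) (h2 : B \ A ⊆ N) : ν A = ν B := by
  have key : ∀ X Y : Set ℝ, X \ Y ⊆ N → ν X ≤ ν Y := by
    intro X Y hXY
    calc ν X ≤ ν (Y ∪ N) := measure_mono (fun x hx => by
          by_cases hxy : x ∈ Y
          · exact Or.inl hxy
          · exact Or.inr (hXY ⟨hx, hxy⟩))
    _ ≤ ν Y + ν N := measure_union_le _ _
    _ = ν Y := by rw [hN, add_zero]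
  exact le_antisymm (key A B h1) (key B A h2)

end helpers

/-- **Proposition 3.3.** If `μ` is an absolutely continuous `F_r`-invariant probability measure
on `[0,1]` with `x ↦ μ([0,x])` strictly increasing, `h` is the inverse of `x ↦ μ([0,x])`, and
`h⁻¹ ∘ F_r ∘ h` is linear on each `h⁻¹((aᵢ,bᵢ))`, then `Y n = φ_F(h(U), n)` is a discrete-time
random walk with increment distribution `P(Y n - Y (n-1) = m) = λ {x ∈ [0,1] : φ_F(h x,1) = m}`. -/


theorem shift_periodic_acim_random_walk
    (F : ℝ → EReal) (k : ℕ) (t : ℕ → ℝ) (hF : ShiftPeriodicSpikes F k t)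
    (I : Type) (hI : Countable I) (a b : I → ℝ)
    (hsub : ∀ i, Set.Ioo (a i) (b i) ⊆ Set.Icc (0 : ℝ) 1)
    (hdisj : Pairwise fun i j => Disjoint (Set.Ioo (a i) (b i)) (Set.Ioo (a j) (b j)))
    (hcov : (Set.Icc (0 : ℝ) 1 \ ⋃ i, Set.Ioo (a i) (b i)).Countable)
    (hmono : ∀ i, StrictMonoOn (restrictedMap F) (Set.Ioo (a i) (b i)) ∨
      StrictAntiOn (restrictedMap F) (Set.Ioo (a i) (b i)))
    (himg : ∀ i, restrictedMap F '' Set.Ioo (a i) (b i) = Set.Ioo (0 : ℝ) 1)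
    (μ : Measure ℝ) (hprob : IsProbabilityMeasure μ)
    (hac : μ ≪ volume) (hsupp : μ (Set.Icc (0 : ℝ) 1)ᶜ = 0)
    (hinv : ∀ A : Set ℝ, MeasurableSet A → μ ((restrictedMap F) ⁻¹' A) = μ A)
    (hstrict : StrictMonoOn (fun x => (μ (Set.Icc 0 x)).toReal) (Set.Icc (0 : ℝ) 1))
    (h : ℝ → ℝ)
    (hinverse : Set.InvOn h (fun x => (μ (Set.Icc 0 x)).toReal)
      (Set.Icc (0 : ℝ) 1) (Set.Icc (0 : ℝ) 1))
    (hlin : ∀ i, ∃ c d : ℝ,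
      ∀ x ∈ (fun x => (μ (Set.Icc 0 x)).toReal) '' Set.Ioo (a i) (b i),
        (μ (Set.Icc 0 (restrictedMap F (h x)))).toReal = c * x + d) :
    IsCocycleRandomWalk F h := by
  classical
  haveI := hI
  haveI := hprob
  -- ## Step 0: notation and basic facts
  set g : ℝ → ℝ := fun x => (μ (Set.Icc 0 x)).toReal with hg_def
  set lam : Measure ℝ := volume.restrict (Set.Icc (0:ℝ) 1) with hlam_def
  haveI hlamprob : IsProbabilityMeasure lam := by
    constructor
    rw [hlam_def, Measure.restrict_apply_univ, Real.volume_Icc]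
    norm_num
  haveI : NullSingletonClass μ := ⟨fun x => hac (by simp)⟩
  have hμcount : ∀ s : Set ℝ, s.Countable → μ s = 0 := fun s hs => hs.measure_zero μ
  have hμIcc : μ (Set.Icc (0:ℝ) 1) = 1 := by
    have h1 := measure_add_measure_compl (μ := μ) (s := Set.Icc (0:ℝ) 1) measurableSet_Icc
    rw [hsupp, add_zero, measure_univ] at h1
    exact h1
  have hμfin : ∀ s : Set ℝ, μ s ≠ ⊤ := fun s => measure_ne_top μ s
  have gmono : Monotone g := fun x y hxy =>
    ENNReal.toReal_mono (hμfin _) (measure_mono (Set.Icc_subset_Icc_right hxy))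
  have g0 : g 0 = 0 := by
    rw [hg_def]; simp [Set.Icc_self]
  have g1 : g 1 = 1 := by rw [hg_def]; simp only [hμIcc]; simp
  have gnonneg : ∀ x, 0 ≤ g x := fun x => ENNReal.toReal_nonneg
  have gle1 : ∀ x, g x ≤ 1 := by
    intro x
    rw [hg_def]
    have : μ (Set.Icc 0 x) ≤ 1 := (measure_mono (Set.subset_univ _)).trans (le_of_eq measure_univ)
    calc (μ (Set.Icc 0 x)).toReal ≤ ENNReal.toReal 1 := ENNReal.toReal_mono (by norm_num) this
    _ = 1 := by simp
  have gneg : ∀ x, x ≤ 0 → g x = 0 := by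
    intro x hx
    rw [hg_def]
    have : μ (Set.Icc 0 x) ≤ μ {0} := measure_mono (fun y hy => by
      simp only [Set.mem_singleton_iff]; exact le_antisymm (hy.2.trans hx) hy.1)
    simp only [measure_singleton] at this
    simp [le_antisymm this zero_le]
  have gbig : ∀ x, 1 ≤ x → g x = 1 := by
    intro x hx
    have h1 : (1:ℝ≥0∞) ≤ μ (Set.Icc 0 x) := by
      rw [← hμIcc]; exact measure_mono (Set.Icc_subset_Icc_right hx)
    have h2 : μ (Set.Icc 0 x) ≤ 1 := (measure_mono (Set.subset_univ _)).trans (le_of_eq measure_univ)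
    rw [hg_def]; simp [le_antisymm h2 h1]
  have hgh : ∀ y ∈ Set.Icc (0:ℝ) 1, g (h y) = y := fun y hy => hinverse.2 hy
  have hhg : ∀ x ∈ Set.Icc (0:ℝ) 1, h (g x) = x := fun x hx => hinverse.1 hx
  have hmemh : ∀ u ∈ Set.Ioo (0:ℝ) 1, h u ∈ Set.Ioo (0:ℝ) 1 := by
    intro u hu
    have h1 : g (h u) = u := hgh u ⟨hu.1.le, hu.2.le⟩
    constructor
    · by_contra hc
      rw [gneg _ (not_lt.mp hc)] at h1
      exact absurd h1.symm (ne_of_gt hu.1)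
    · by_contra hc
      rw [gbig _ (not_lt.mp hc)] at h1
      exact absurd h1.symm (ne_of_lt hu.2)
  have hmonoh : ∀ u v, u ∈ Set.Ioo (0:ℝ) 1 → v ∈ Set.Ioo (0:ℝ) 1 → u ≤ v → h u ≤ h v := by
    intro u v hu hv huv
    by_contra hc
    have h1 : h v < h u := not_le.mp hc
    have h2 := hstrict (Set.Ioo_subset_Icc_self (hmemh v hv)) (Set.Ioo_subset_Icc_self (hmemh u hu)) h1
    rw [hgh u ⟨hu.1.le, hu.2.le⟩, hgh v ⟨hv.1.le, hv.2.le⟩] at h2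
    exact absurd h2 (not_lt.mpr huv)
  -- ## Step 1: measurable monotone modification of h
  set H : ℝ → ℝ := fun u => if u ∈ Set.Ioo (0:ℝ) 1 then h u else if u ≤ 0 then 0 else 1 with hH_def
  have hHIoo : ∀ u ∈ Set.Ioo (0:ℝ) 1, H u = h u := fun u hu => by rw [hH_def]; simp [hu]
  have hHrange : ∀ u, H u ∈ Set.Icc (0:ℝ) 1 := by
    intro u
    rw [hH_def]
    by_cases hu : u ∈ Set.Ioo (0:ℝ) 1
    · simp only [hu, if_true]
      exact Set.Ioo_subset_Icc_self (hmemh u hu)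
    · simp only [hu, if_false]
      by_cases h0 : u ≤ 0 <;> simp [h0]
  have hHmono : Monotone H := by
    intro u v huv
    simp only [hH_def]
    by_cases hu : u ∈ Set.Ioo (0:ℝ) 1 <;> by_cases hv : v ∈ Set.Ioo (0:ℝ) 1 <;>
      simp only [hu, hv, if_true, if_false]
    · exact hmonoh u v hu hv huv
    · have hv1 : ¬ v ≤ 0 := not_le.mpr (lt_of_lt_of_le hu.1 huv)
      simp only [hv1, if_false]
      exact (hmemh u hu).2.le
    · have hu0 : u ≤ 0 := by
        by_contra hc
        push_neg at hc
        exact hu ⟨hc, lt_of_le_of_lt huv hv.2⟩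
      simp only [hu0, if_true]
      exact (hmemh v hv).1.le
    · by_cases hu0 : u ≤ 0 <;> by_cases hv0 : v ≤ 0 <;>
        simp only [hu0, hv0, if_true, if_false]
      · exact le_refl 0
      · norm_num
      · linarith
      · exact le_refl 1
  have hHmeas : Measurable H := hHmono.measurable
  -- ## Step 2: pushforward of uniform by H is μ
  have hmapH : lam.map H = μ := by
    haveI : IsFiniteMeasure (lam.map H) := Measure.isFiniteMeasure_map lam H
    refine Measure.ext_of_Iic (lam.map H) μ (fun x => ?_)
    rw [Measure.map_apply hHmeas measurableSet_Iic]
    rcases lt_or_ge x 0 with hx | hx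
    · have h1 : H ⁻¹' (Set.Iic x) = ∅ := by
        ext u
        simp only [Set.mem_preimage, Set.mem_Iic, Set.mem_empty_iff_false, iff_false, not_le]
        exact lt_of_lt_of_le hx (hHrange u).1
      have h2 : μ (Set.Iic x) = 0 := by
        refine measure_mono_null ?_ hsupp
        intro y hy
        simp only [Set.mem_compl_iff, Set.mem_Icc, not_and_or, not_le]
        exact Or.inl (lt_of_le_of_lt (Set.mem_Iic.mp hy) hx)
      rw [h1, h2]
      simp
    rcases lt_or_ge x 1 with hx1 | hx1
    · -- 0 ≤ x < 1
      have hgx0 : 0 ≤ g x := gnonneg x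
      have hgx1 : g x < 1 := by
        have := hstrict ⟨hx, hx1.le⟩ ⟨zero_le_one, le_refl 1⟩ hx1
        rwa [g1] at this
      have hH1 : H 1 = 1 := by
        simp only [hH_def]
        norm_num
      have hH0 : H 0 = 0 := by
        simp only [hH_def]
        norm_num
      have hseteq : H ⁻¹' (Set.Iic x) ∩ Set.Icc 0 1 = Set.Icc 0 (g x) := by
        ext u
        simp only [Set.mem_inter_iff, Set.mem_preimage, Set.mem_Iic, Set.mem_Icc]
        constructor
        · rintro ⟨hHu, hu0, hu1⟩
          refine ⟨hu0, ?_⟩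
          by_cases hu : u ∈ Set.Ioo (0:ℝ) 1
          · rw [hHIoo u hu] at hHu
            have h3 : g (h u) ≤ g x := gmono hHu
            rwa [hgh u ⟨hu.1.le, hu.2.le⟩] at h3
          · rcases eq_or_lt_of_le hu0 with h0 | hu0'
            · rw [← h0]; exact hgx0
            rcases eq_or_lt_of_le hu1 with h1 | hu1'
            · exfalso
              rw [h1, hH1] at hHu
              linarith
            · exact absurd ⟨hu0', hu1'⟩ hu
        · rintro ⟨hu0, hugx⟩
          have hu1 : u ≤ 1 := hugx.trans (gle1 x)
          refine ⟨?_, hu0, hu1⟩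
          by_cases hu : u ∈ Set.Ioo (0:ℝ) 1
          · rw [hHIoo u hu]
            by_contra hc
            push_neg at hc
            have h3 := hstrict ⟨hx, hx1.le⟩ (Set.Ioo_subset_Icc_self (hmemh u hu)) hc
            rw [hgh u ⟨hu.1.le, hu.2.le⟩] at h3
            exact absurd hugx (not_le.mpr h3)
          · have hu0' : u = 0 := by
              rcases eq_or_lt_of_le hu0 with h' | h'
              · exact h'.symm
              · exact absurd ⟨h', lt_of_le_of_lt hugx hgx1⟩ hu
            rw [hu0', hH0]
            exact hx
      have hμx : μ (Set.Iic x) = μ (Set.Icc 0 x) := by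
        apply le_antisymm
        · calc μ (Set.Iic x) ≤ μ (Set.Icc 0 x ∪ (Set.Icc 0 1)ᶜ) := by
                refine measure_mono (fun y hy => ?_)
                by_cases hy0 : 0 ≤ y
                · exact Or.inl ⟨hy0, Set.mem_Iic.mp hy⟩
                · refine Or.inr ?_
                  simp only [Set.mem_compl_iff, Set.mem_Icc, not_and_or, not_le]
                  exact Or.inl (not_le.mp hy0)
          _ ≤ μ (Set.Icc 0 x) + μ (Set.Icc 0 1)ᶜ := measure_union_le _ _
          _ = μ (Set.Icc 0 x) := by rw [hsupp, add_zero]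
        · exact measure_mono (fun y hy => hy.2)
      rw [hlam_def, Measure.restrict_apply' measurableSet_Icc, hseteq, Real.volume_Icc, hμx,
        ← ENNReal.ofReal_toReal (hμfin (Set.Icc 0 x))]
      rw [sub_zero]
    · -- 1 ≤ x
      have h1 : H ⁻¹' (Set.Iic x) = Set.univ :=
        Set.eq_univ_of_forall (fun u => (hHrange u).2.trans hx1)
      have h2 : μ (Set.Iic x) = 1 := by
        apply le_antisymm ((measure_mono (Set.subset_univ _)).trans_eq measure_univ)
        rw [← hμIcc]
        exact measure_mono (fun y hy => hy.2.trans hx1)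
      rw [h1, h2]
      exact measure_univ
  -- ## Step 3: globally measurable version of the restricted map
  set U : Set ℝ := ⋃ j ∈ Finset.range k, Set.Ioo (t j) (t (j+1)) with hU_def
  have hUmeas : MeasurableSet U := by
    rw [hU_def]
    exact MeasurableSet.biUnion (Finset.countable_toSet _) (fun j _ => measurableSet_Ioo)
  set T' : ℝ → ℝ := fun x => if x ∈ U then restrictedMap F x else 0 with hT'_def
  have hT'meas : Measurable T' := by
    -- measurable extensions of F from each continuity interval
    have hFj : ∀ j < k, Measurable ((Set.Ioo (t j) (t (j+1))).piecewise F (fun _ => (⊥ : EReal))) := by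
      intro j hj
      exact (hF.cont j hj).measurable_piecewise continuousOn_const measurableSet_Ioo
    have hrTj : ∀ j < k, Measurable (fun x =>
        if (Set.Ioo (t j) (t (j+1))).piecewise F (fun _ => (⊥ : EReal)) x = ⊤ ∨
           (Set.Ioo (t j) (t (j+1))).piecewise F (fun _ => (⊥ : EReal)) x = ⊥ then 0
        else Int.fract ((Set.Ioo (t j) (t (j+1))).piecewise F (fun _ => (⊥ : EReal)) x).toReal) := by
      intro j hj
      refine Measurable.ite ?_ measurable_const ?_
      · exact ((hFj j hj) (measurableSet_singleton ⊤)).union ((hFj j hj) (measurableSet_singleton ⊥))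
      · exact ((measurable_ereal_toReal.comp (hFj j hj)).fract)
    have hrTeq : ∀ j < k, ∀ x ∈ Set.Ioo (t j) (t (j+1)),
        (if (Set.Ioo (t j) (t (j+1))).piecewise F (fun _ => (⊥ : EReal)) x = ⊤ ∨
           (Set.Ioo (t j) (t (j+1))).piecewise F (fun _ => (⊥ : EReal)) x = ⊥ then 0
        else Int.fract ((Set.Ioo (t j) (t (j+1))).piecewise F (fun _ => (⊥ : EReal)) x).toReal)
          = restrictedMap F x := by
      intro j hj x hx
      simp only [Set.piecewise_eq_of_mem _ _ _ hx]
      rfl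
    intro s hs
    have hpre : T' ⁻¹' s =
        (⋃ j ∈ Finset.range k, (Set.Ioo (t j) (t (j+1)) ∩ (fun x =>
        if (Set.Ioo (t j) (t (j+1))).piecewise F (fun _ => (⊥ : EReal)) x = ⊤ ∨
           (Set.Ioo (t j) (t (j+1))).piecewise F (fun _ => (⊥ : EReal)) x = ⊥ then 0
        else Int.fract ((Set.Ioo (t j) (t (j+1))).piecewise F (fun _ => (⊥ : EReal)) x).toReal) ⁻¹' s))
        ∪ (Uᶜ ∩ (if (0:ℝ) ∈ s then Set.univ else ∅)) := by
      ext x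
      simp only [Set.mem_preimage, Set.mem_union, Set.mem_inter_iff, Set.mem_compl_iff]
      by_cases hx : x ∈ U
      · have hx' := hx
        rw [hU_def] at hx'
        simp only [Set.mem_iUnion, exists_prop] at hx'
        obtain ⟨j, hj, hxj⟩ := hx'
        have hj' : j < k := Finset.mem_range.mp hj
        have hval : T' x = restrictedMap F x := by
          simp only [hT'_def]; rw [if_pos hx]
        constructor
        · intro hxs
          left
          refine Set.mem_biUnion hj ⟨hxj, ?_⟩
          simp only [Set.mem_preimage]
          rw [hrTeq j hj' x hxj, ← hval]
          exact hxs
        · rintro (hl | hr)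
          · simp only [Set.mem_iUnion, exists_prop] at hl
            obtain ⟨j', hj'', hxj', hxs⟩ := hl
            have heq := hrTeq j' (Finset.mem_range.mp hj'') x hxj'
            rw [hval, ← heq]
            exact hxs
          · exact absurd hx hr.1
      · have hval : T' x = 0 := by
          simp only [hT'_def]; rw [if_neg hx]
        constructor
        · intro hxs
          right
          rw [hval] at hxs
          exact ⟨hx, by rw [if_pos hxs]; trivial⟩
        · rintro (hl | hr)
          · simp only [Set.mem_iUnion, exists_prop] at hl
            obtain ⟨j', hj'', hxj', hxs⟩ := hl
            exfalso
            apply hx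
            rw [hU_def]
            exact Set.mem_biUnion hj'' hxj'
          · rw [hval]
            by_cases h0 : (0:ℝ) ∈ s
            · exact h0
            · exfalso
              have := hr.2
              rw [if_neg h0] at this
              exact this
    rw [hpre]
    refine MeasurableSet.union ?_ ?_
    · refine MeasurableSet.biUnion (Finset.countable_toSet _) (fun j hj => ?_)
      exact measurableSet_Ioo.inter ((hrTj j (Finset.mem_range.mp hj)) hs)
    · refine hUmeas.compl.inter ?_
      split
      · exact MeasurableSet.univ
      · exact MeasurableSet.empty
  -- ## Step 4: branch data
  have hbc := fun i => branch_const F k t hF (a i) (b i) (hsub i) (hmono i) (himg i)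
  choose jb hjbk hjsub mb hmb using hbc
  have hbrU : ∀ i, Set.Ioo (a i) (b i) ⊆ U := by
    intro i x hx
    rw [hU_def]
    exact Set.mem_biUnion (Finset.mem_range.mpr (hjbk i)) (hjsub i hx)
  have hT'br : ∀ i, ∀ x ∈ Set.Ioo (a i) (b i), T' x = restrictedMap F x := by
    intro i x hx
    simp only [hT'_def]
    rw [if_pos (hbrU i hx)]
  have hTbr : ∀ i, ∀ x ∈ Set.Ioo (a i) (b i), restrictedMap F x ∈ Set.Ioo (0:ℝ) 1 :=
    fun i x hx => (himg i) ▸ Set.mem_image_of_mem _ hx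
  have tlt : ∀ p q, p < q → q ≤ k → t p < t q := by
    intro p q hpq hqk
    induction q with
    | zero => omega
    | succ n ih =>
      rcases Nat.lt_succ_iff_lt_or_eq.mp hpq with hc | hc
      · exact (ih hc (by omega)).trans (hF.tmono n (by omega))
      · subst hc; exact hF.tmono p (by omega)
  have tnn : ∀ p, p ≤ k → 0 ≤ t p := by
    intro p hp
    rcases Nat.eq_zero_or_pos p with rfl | hp0
    · simp [hF.t0]
    · rw [← hF.t0]; exact (tlt 0 p hp0 hp).le
  have tle1 : ∀ p, p ≤ k → t p ≤ 1 := by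
    intro p hp
    rcases eq_or_lt_of_le hp with rfl | hp'
    · simp [hF.tk]
    · rw [← hF.tk]; exact (tlt p k hp' (le_refl k)).le
  have hbr01 : ∀ i, Set.Ioo (a i) (b i) ⊆ Set.Ioo (0:ℝ) 1 := by
    intro i x hx
    have h1 := hjsub i hx
    exact ⟨lt_of_le_of_lt (tnn (jb i) (hjbk i).le) h1.1,
      lt_of_lt_of_le h1.2 (tle1 _ (hjbk i))⟩
  -- ## Step 5: μ is T'-invariant
  have hbadnull : μ ((⋃ i, Set.Ioo (a i) (b i))ᶜ) = 0 := by
    have hsplit : (⋃ i, Set.Ioo (a i) (b i))ᶜ ⊆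
        (Set.Icc (0:ℝ) 1)ᶜ ∪ (Set.Icc 0 1 \ ⋃ i, Set.Ioo (a i) (b i)) := by
      intro x hx
      by_cases hxI : x ∈ Set.Icc (0:ℝ) 1
      · exact Or.inr ⟨hxI, hx⟩
      · exact Or.inl hxI
    exact measure_mono_null hsplit (measure_union_null hsupp (hμcount _ hcov))
  have hagree : ∀ x, x ∈ ⋃ i, Set.Ioo (a i) (b i) → T' x = restrictedMap F x := by
    intro x hx
    obtain ⟨i, hi⟩ := Set.mem_iUnion.mp hx
    exact hT'br i x hi
  have hT'ae : ∀ A : Set ℝ, μ (T' ⁻¹' A) = μ (restrictedMap F ⁻¹' A) := by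
    intro A
    refine measure_eq_of_diff_null hbadnull ?_ ?_
    · intro x hx
      simp only [Set.mem_compl_iff]
      intro hxb
      rw [Set.mem_diff, Set.mem_preimage, Set.mem_preimage, hagree x hxb] at hx
      exact hx.2 hx.1
    · intro x hx
      simp only [Set.mem_compl_iff]
      intro hxb
      rw [Set.mem_diff, Set.mem_preimage, Set.mem_preimage, hagree x hxb] at hx
      exact hx.2 hx.1
  have hmapT' : μ.map T' = μ := by
    refine Measure.ext (fun A hA => ?_)
    rw [Measure.map_apply hT'meas hA, hT'ae A, hinv A hA]
  -- ## Step 6: the iterated maps and their laws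
  set M : ℕ → ℝ → ℝ := fun n u => T'^[n] (H u) with hM_def
  have hMmeas : ∀ n, Measurable (M n) := fun n => (hT'meas.iterate n).comp hHmeas
  have hmapM : ∀ n, lam.map (M n) = μ := by
    intro n
    induction n with
    | zero =>
      have hid : M 0 = H := by funext u; simp [hM_def]
      rw [hid, hmapH]
    | succ n ih =>
      have hcomp : M (n+1) = T' ∘ M n := by
        funext u
        simp only [hM_def, Function.comp_apply, Function.iterate_succ_apply']
      rw [hcomp, ← Measure.map_map hT'meas (hMmeas n), ih, hmapT']
  -- ## Step 7: per-branch independence property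
  have hg01 : ∀ y ∈ Set.Ioo (0:ℝ) 1, g y ∈ Set.Ioo (0:ℝ) 1 := by
    intro y hy
    constructor
    · have := hstrict ⟨le_refl 0, zero_le_one⟩ (Set.Ioo_subset_Icc_self hy) hy.1
      rwa [g0] at this
    · have := hstrict (Set.Ioo_subset_Icc_self hy) ⟨zero_le_one, le_refl 1⟩ hy.2
      rwa [g1] at this
  have hkey : ∀ i, ∀ D : Set ℝ, MeasurableSet D →
      μ (Set.Ioo (a i) (b i) ∩ T' ⁻¹' D) = μ (Set.Ioo (a i) (b i)) * μ D := by
    intro i D hD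
    obtain ⟨c, d, hcd⟩ := hlin i
    set J := H ⁻¹' (Set.Ioo (a i) (b i)) ∩ Set.Ioo (0:ℝ) 1 with hJ_def
    have hJchar : ∀ u, u ∈ J ↔ (u ∈ Set.Ioo (0:ℝ) 1 ∧ h u ∈ Set.Ioo (a i) (b i)) := by
      intro u
      constructor
      · rintro ⟨hu1, hu2⟩
        rw [Set.mem_preimage, hHIoo u hu2] at hu1
        exact ⟨hu2, hu1⟩
      · rintro ⟨hu1, hu2⟩
        exact ⟨by rw [Set.mem_preimage, hHIoo u hu1]; exact hu2, hu1⟩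
    have hgimg : ∀ u ∈ J, u ∈ g '' Set.Ioo (a i) (b i) := by
      intro u hu
      obtain ⟨hu1, hu2⟩ := (hJchar u).mp hu
      exact ⟨h u, hu2, hgh u ⟨hu1.1.le, hu1.2.le⟩⟩
    have hcu : ∀ u ∈ J, g (restrictedMap F (h u)) = c * u + d := fun u hu => hcd u (hgimg u hu)
    have hTval : ∀ u ∈ J, T' (H u) = h (c*u + d) ∧ (c*u+d) ∈ Set.Ioo (0:ℝ) 1 := by
      intro u hu
      obtain ⟨hu1, hu2⟩ := (hJchar u).mp hu
      have hw01 : restrictedMap F (h u) ∈ Set.Ioo (0:ℝ) 1 := hTbr i (h u) hu2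
      have hcw : (c*u+d) ∈ Set.Ioo (0:ℝ) 1 := by
        rw [← hcu u hu]
        exact hg01 _ hw01
      refine ⟨?_, hcw⟩
      rw [hHIoo u hu1, hT'br i (h u) hu2]
      have := hhg (restrictedMap F (h u)) (Set.Ioo_subset_Icc_self hw01)
      rw [hcu u hu] at this
      exact this.symm
    have hsurj : ∀ v ∈ Set.Ioo (0:ℝ) 1, ∃ u ∈ J, c*u+d = v := by
      intro v hv
      have hhv : h v ∈ Set.Ioo (0:ℝ) 1 := hmemh v hv
      have : h v ∈ restrictedMap F '' Set.Ioo (a i) (b i) := by rw [himg i]; exact hhv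
      obtain ⟨y, hy, hTy⟩ := this
      have hy01 : y ∈ Set.Ioo (0:ℝ) 1 := hbr01 i hy
      have hu01 : g y ∈ Set.Ioo (0:ℝ) 1 := hg01 y hy01
      have hhgy : h (g y) = y := hhg y (Set.Ioo_subset_Icc_self hy01)
      have huJ : g y ∈ J := (hJchar _).mpr ⟨hu01, by rw [hhgy]; exact hy⟩
      refine ⟨g y, huJ, ?_⟩
      rw [← hcu _ huJ, hhgy, hTy, hgh v (Set.Ioo_subset_Icc_self hv)]
    have hcne : c ≠ 0 := by
      intro hc0
      obtain ⟨u₁, _, he₁⟩ := hsurj (1/4) (by norm_num)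
      obtain ⟨u₂, _, he₂⟩ := hsurj (3/4) (by norm_num)
      rw [hc0] at he₁ he₂
      norm_num at he₁ he₂
      linarith
    have hJaff : J = (fun u => c*u+d) ⁻¹' (Set.Ioo (0:ℝ) 1) := by
      apply Set.Subset.antisymm
      · intro u hu
        exact (hTval u hu).2
      · intro w hw
        obtain ⟨u, huJ, hue⟩ := hsurj (c*w+d) hw
        have : u = w := by
          have : c*u = c*w := by linarith
          exact mul_left_cancel₀ hcne this
        rwa [← this]
    set V := H ⁻¹' D ∩ Set.Ioo (0:ℝ) 1 with hV_def
    have hVmeas : MeasurableSet V := (hHmeas hD).inter measurableSet_Ioo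
    have hVsub : V ⊆ Set.Ioo (0:ℝ) 1 := fun v hv => hv.2
    have hVh : ∀ v ∈ Set.Ioo (0:ℝ) 1, (v ∈ V ↔ h v ∈ D) := by
      intro v hv
      rw [hV_def]
      simp only [Set.mem_inter_iff, Set.mem_preimage, hHIoo v hv, and_iff_left hv]
    have hpair : volume ({(0:ℝ), 1} : Set ℝ) = 0 :=
      ((Set.countable_singleton (1:ℝ)).insert 0).measure_zero volume
    -- the three preimage computations
    have hpre1 : H ⁻¹' (Set.Ioo (a i) (b i) ∩ T' ⁻¹' D) ∩ Set.Icc (0:ℝ) 1 =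
        J ∩ (fun u => c*u+d) ⁻¹' V := by
      ext u
      simp only [Set.mem_inter_iff, Set.mem_preimage]
      constructor
      · rintro ⟨⟨hbr, hTD⟩, hIcc⟩
        have hu01 : u ∈ Set.Ioo (0:ℝ) 1 := by
          rcases eq_or_lt_of_le hIcc.1 with h0 | h0
          · exfalso
            have : H u = 0 := by rw [← h0]; simp only [hH_def]; norm_num
            rw [this] at hbr
            exact absurd (hbr01 i hbr).1 (lt_irrefl 0)
          rcases eq_or_lt_of_le hIcc.2 with h1 | h1
          · exfalso
            have : H u = 1 := by rw [h1]; simp only [hH_def]; norm_num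
            rw [this] at hbr
            exact absurd (hbr01 i hbr).2 (lt_irrefl 1)
          · exact ⟨h0, h1⟩
        have huJ : u ∈ J := ⟨hbr, hu01⟩
        obtain ⟨hval, hcw⟩ := hTval u huJ
        refine ⟨huJ, ?_⟩
        rw [(hVh _ hcw)]
        rwa [← hval]
      · rintro ⟨huJ, hV'⟩
        obtain ⟨hu01, hhu⟩ := (hJchar u).mp huJ
        obtain ⟨hval, hcw⟩ := hTval u huJ
        refine ⟨⟨huJ.1, ?_⟩, Set.Ioo_subset_Icc_self hu01⟩
        rw [hval]
        exact (hVh _ hcw).mp hV'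
    have hpre2 : H ⁻¹' (Set.Ioo (a i) (b i)) ∩ Set.Icc (0:ℝ) 1 = J := by
      ext u
      simp only [Set.mem_inter_iff, Set.mem_preimage]
      constructor
      · rintro ⟨hbr, hIcc⟩
        have hu01 : u ∈ Set.Ioo (0:ℝ) 1 := by
          rcases eq_or_lt_of_le hIcc.1 with h0 | h0
          · exfalso
            have : H u = 0 := by rw [← h0]; simp only [hH_def]; norm_num
            rw [this] at hbr
            exact absurd (hbr01 i hbr).1 (lt_irrefl 0)
          rcases eq_or_lt_of_le hIcc.2 with h1 | h1
          · exfalso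
            have : H u = 1 := by rw [h1]; simp only [hH_def]; norm_num
            rw [this] at hbr
            exact absurd (hbr01 i hbr).2 (lt_irrefl 1)
          · exact ⟨h0, h1⟩
        exact ⟨hbr, hu01⟩
      · rintro ⟨hbr, hu01⟩
        exact ⟨hbr, Set.Ioo_subset_Icc_self hu01⟩
    have hpre3 : volume (H ⁻¹' D ∩ Set.Icc (0:ℝ) 1) = volume V := by
      refine measure_eq_of_diff_null hpair ?_ ?_
      · intro u hu
        simp only [Set.mem_insert_iff, Set.mem_singleton_iff]
        by_contra hc
        push_neg at hc
        have hu01 : u ∈ Set.Ioo (0:ℝ) 1 :=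
          ⟨lt_of_le_of_ne hu.1.2.1 (Ne.symm hc.1), lt_of_le_of_ne hu.1.2.2 hc.2⟩
        exact hu.2 ⟨hu.1.1, hu01⟩
      · intro u hu
        exact absurd ⟨hu.1.1, Set.Ioo_subset_Icc_self hu.1.2⟩ hu.2
    -- put everything together
    have e1 : μ (Set.Ioo (a i) (b i) ∩ T' ⁻¹' D) = ENNReal.ofReal |c⁻¹| * volume V := by
      rw [← hmapH, Measure.map_apply hHmeas (measurableSet_Ioo.inter (hT'meas hD)), hlam_def,
        Measure.restrict_apply' measurableSet_Icc, hpre1, hJaff, ← Set.preimage_inter,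
        Set.inter_eq_self_of_subset_right hVsub, volume_preimage_affine hcne]
    have e2 : μ (Set.Ioo (a i) (b i)) = ENNReal.ofReal |c⁻¹| := by
      rw [← hmapH, Measure.map_apply hHmeas measurableSet_Ioo, hlam_def,
        Measure.restrict_apply' measurableSet_Icc, hpre2, hJaff,
        volume_preimage_affine hcne]
      simp [Real.volume_Ioo]
    have e3 : μ D = volume V := by
      rw [← hmapH, Measure.map_apply hHmeas hD, hlam_def,
        Measure.restrict_apply' measurableSet_Icc, hpre3]
    rw [e1, e2, e3]
  -- ## Step 8: the increment observable
  set Z0 : ℝ → ℤ := fun y => if hy : ∃ i, y ∈ Set.Ioo (a i) (b i) then mb hy.choose else 0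
    with hZ0_def
  have hZ0br : ∀ i, ∀ y ∈ Set.Ioo (a i) (b i), Z0 y = mb i := by
    intro i y hy
    have hex : ∃ i', y ∈ Set.Ioo (a i') (b i') := ⟨i, hy⟩
    simp only [hZ0_def]
    rw [dif_pos hex]
    have hch : hex.choose = i := by
      by_contra hne
      exact Set.disjoint_left.mp (hdisj hne) hex.choose_spec hy
    rw [hch]
  have hZ0meas : Measurable Z0 := by
    intro s _
    have hpre : Z0 ⁻¹' s = (⋃ i ∈ {i : I | mb i ∈ s}, Set.Ioo (a i) (b i)) ∪
        ((⋃ i, Set.Ioo (a i) (b i))ᶜ ∩ (if (0:ℤ) ∈ s then Set.univ else ∅)) := by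
      ext y
      simp only [Set.mem_preimage, Set.mem_union, Set.mem_inter_iff, Set.mem_compl_iff]
      by_cases hy : ∃ i, y ∈ Set.Ioo (a i) (b i)
      · obtain ⟨i, hi⟩ := hy
        rw [hZ0br i y hi]
        constructor
        · intro hs
          exact Or.inl (Set.mem_biUnion hs hi)
        · rintro (hl | hr)
          · simp only [Set.mem_iUnion, exists_prop, Set.mem_setOf_eq] at hl
            obtain ⟨i', hi's, hyi'⟩ := hl
            rw [← hZ0br i y hi, hZ0br i' y hyi']
            exact hi's
          · exact absurd (Set.mem_iUnion.mpr ⟨i, hi⟩) hr.1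
      · have hz : Z0 y = 0 := by simp only [hZ0_def]; rw [dif_neg hy]
        rw [hz]
        constructor
        · intro h0
          refine Or.inr ⟨fun hc => hy (Set.mem_iUnion.mp hc), ?_⟩
          rw [if_pos h0]
          trivial
        · rintro (hl | hr)
          · simp only [Set.mem_iUnion, exists_prop, Set.mem_setOf_eq] at hl
            obtain ⟨i', _, hyi'⟩ := hl
            exact absurd ⟨i', hyi'⟩ hy
          · by_cases h0 : (0:ℤ) ∈ s
            · exact h0
            · rw [if_neg h0] at hr
              exact absurd hr.2 (Set.notMem_empty y)
    rw [hpre]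
    refine MeasurableSet.union
      (MeasurableSet.biUnion (Set.to_countable _) (fun i _ => measurableSet_Ioo)) ?_
    refine (MeasurableSet.iUnion (fun i => measurableSet_Ioo)).compl.inter ?_
    split
    · exact MeasurableSet.univ
    · exact MeasurableSet.empty
  -- ## Step 9: the good set Ω
  set Ω : Set ℝ := Set.Ioo (0:ℝ) 1 ∩ ⋂ n, (M n) ⁻¹' (⋃ i, Set.Ioo (a i) (b i)) with hΩ_def
  have hΩnull : lam Ωᶜ = 0 := by
    have hsub1 : Ωᶜ ⊆ (Set.Ioo (0:ℝ) 1)ᶜ ∪ ⋃ n, (M n) ⁻¹' ((⋃ i, Set.Ioo (a i) (b i))ᶜ) := by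
      intro x hx
      rw [hΩ_def] at hx
      simp only [Set.mem_compl_iff, Set.mem_inter_iff, not_and_or] at hx
      rcases hx with hx | hx
      · exact Or.inl hx
      · right
        simp only [Set.mem_iInter, not_forall] at hx
        obtain ⟨n, hn⟩ := hx
        exact Set.mem_iUnion.mpr ⟨n, hn⟩
    refine measure_mono_null hsub1 (measure_union_null ?_ ?_)
    · rw [hlam_def, Measure.restrict_apply' measurableSet_Icc]
      have hsub2 : (Set.Ioo (0:ℝ) 1)ᶜ ∩ Set.Icc 0 1 ⊆ {0, 1} := by
        intro x hx
        rcases eq_or_lt_of_le hx.2.1 with h0 | h0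
        · exact Or.inl h0.symm
        rcases eq_or_lt_of_le hx.2.2 with h1 | h1
        · exact Or.inr h1
        · exact absurd ⟨h0, h1⟩ hx.1
      exact measure_mono_null hsub2 (((Set.countable_singleton (1:ℝ)).insert 0).measure_zero volume)
    · rw [measure_iUnion_null_iff]
      intro n
      calc lam ((M n) ⁻¹' ((⋃ i, Set.Ioo (a i) (b i))ᶜ))
          = (lam.map (M n)) ((⋃ i, Set.Ioo (a i) (b i))ᶜ) :=
            (Measure.map_apply (hMmeas n)
              (MeasurableSet.iUnion (fun i => measurableSet_Ioo)).compl).symm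
        _ = μ ((⋃ i, Set.Ioo (a i) (b i))ᶜ) := by rw [hmapM n]
        _ = 0 := hbadnull
  have hΩae : ∀ᵐ x ∂lam, x ∈ Ω := by
    rw [ae_iff]
    exact hΩnull
  have hcoc : ∀ u ∈ Ω, ∀ n : ℕ, cocycle F (h u) n = ∑ r ∈ Finset.range n, Z0 (M r u) := by
    intro u hu n
    obtain ⟨hu01, hubr⟩ := hu
    have hubr' : ∀ r : ℕ, M r u ∈ ⋃ i, Set.Ioo (a i) (b i) := fun r => Set.mem_iInter.mp hubr r
    have hiter : ∀ r : ℕ, (restrictedMap F)^[r] (h u) = M r u := by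
      intro r
      induction r with
      | zero => simp [hM_def, hHIoo u hu01]
      | succ r ih =>
        have h1 : M (r+1) u = T' (M r u) := by
          simp only [hM_def, Function.iterate_succ_apply']
        rw [Function.iterate_succ_apply', ih, h1, hagree _ (hubr' r)]
    have hfin' : ∀ r, F ((restrictedMap F)^[r] (h u)) ≠ ⊤ ∧ F ((restrictedMap F)^[r] (h u)) ≠ ⊥ := by
      intro r
      rw [hiter r]
      obtain ⟨i, hi⟩ := Set.mem_iUnion.mp (hubr' r)
      exact (hmb i _ hi).1
    have hterm : ∀ r, ⌊(F ((restrictedMap F)^[r] (h u))).toReal⌋ = Z0 (M r u) := by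
      intro r
      rw [hiter r]
      obtain ⟨i, hi⟩ := Set.mem_iUnion.mp (hubr' r)
      rw [(hmb i _ hi).2, hZ0br i _ hi]
    have hcond : ∀ kk < n, F ((restrictedMap F)^[kk] (h u)) ≠ ⊤ ∧
        F ((restrictedMap F)^[kk] (h u)) ≠ ⊥ := fun kk _ => hfin' kk
    unfold cocycle
    rw [if_pos hcond]
    exact Finset.sum_congr rfl (fun r _ => hterm r)
  have hZeq : ∀ n : ℕ, ∀ u ∈ Ω,
      cocycle F (h u) (n+1) - cocycle F (h u) n = Z0 (M n u) := by
    intro n u hu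
    rw [hcoc u hu, hcoc u hu, Finset.sum_range_succ]
    ring
  -- ## Step 10: distribution computations
  have hsingle : ∀ n : ℕ, ∀ B : Set ℤ, lam ((fun u => Z0 (M n u)) ⁻¹' B) = μ (Z0 ⁻¹' B) := by
    intro n B
    have h1 : (fun u => Z0 (M n u)) ⁻¹' B = (M n) ⁻¹' (Z0 ⁻¹' B) := rfl
    rw [h1]
    calc lam ((M n) ⁻¹' (Z0 ⁻¹' B)) = (lam.map (M n)) (Z0 ⁻¹' B) :=
          (Measure.map_apply (hMmeas n) (hZ0meas trivial)).symm
    _ = μ (Z0 ⁻¹' B) := by rw [hmapM n]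
  have hZae : ∀ n : ℕ, (fun u => cocycle F (h u) (n+1) - cocycle F (h u) n)
      =ᵐ[lam] (fun u => Z0 (M n u)) := by
    intro n
    filter_upwards [hΩae] with u hu
    exact hZeq n u hu
  have hmemZ : ∀ u ∈ Ω, ∀ n : ℕ, ∀ B : Set ℤ,
      (Z0 (M n u) ∈ B ↔ M n u ∈ ⋃ i ∈ {i : I | mb i ∈ B}, Set.Ioo (a i) (b i)) := by
    intro u hu n B
    obtain ⟨i, hi⟩ := Set.mem_iUnion.mp (Set.mem_iInter.mp hu.2 n)
    rw [hZ0br i _ hi]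
    constructor
    · intro hB
      exact Set.mem_biUnion hB hi
    · intro hB
      simp only [Set.mem_iUnion, exists_prop, Set.mem_setOf_eq] at hB
      obtain ⟨i', hi'B, hyi'⟩ := hB
      rw [← hZ0br i _ hi, hZ0br i' _ hyi']
      exact hi'B
  have hmeasC : ∀ B : Set ℤ, MeasurableSet (⋃ i ∈ {i : I | mb i ∈ B}, Set.Ioo (a i) (b i)) :=
    fun B => MeasurableSet.biUnion (Set.to_countable _) (fun i _ => measurableSet_Ioo)
  have hsingleM : ∀ n : ℕ, ∀ B : Set ℤ,
      lam ((fun x => cocycle F (h x) (n+1) - cocycle F (h x) n) ⁻¹' B)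
        = μ (⋃ i ∈ {i : I | mb i ∈ B}, Set.Ioo (a i) (b i)) := by
    intro n B
    have h1 : lam ((fun x => cocycle F (h x) (n+1) - cocycle F (h x) n) ⁻¹' B)
        = lam ((M n) ⁻¹' (⋃ i ∈ {i : I | mb i ∈ B}, Set.Ioo (a i) (b i))) := by
      refine measure_eq_of_diff_null hΩnull ?_ ?_
      · intro u hu
        rw [Set.mem_compl_iff]
        intro huΩ
        apply hu.2
        rw [Set.mem_preimage]
        refine (hmemZ u huΩ n B).mp ?_
        rw [← hZeq n u huΩ]
        exact hu.1
      · intro u hu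
        rw [Set.mem_compl_iff]
        intro huΩ
        apply hu.2
        rw [Set.mem_preimage, hZeq n u huΩ]
        exact (hmemZ u huΩ n B).mpr hu.1
    rw [h1, ← Measure.map_apply (hMmeas n) (hmeasC B), hmapM n]
  -- ## Conclusions
  refine ⟨?_, ?_, ?_⟩
  · -- independence
    rw [ProbabilityTheory.iIndepFun_iff_measure_inter_preimage_eq_mul]
    intro S sets _
    have hA : lam (⋂ n ∈ S, (fun x => cocycle F (h x) (n+1) - cocycle F (h x) n) ⁻¹' sets n)
        = lam (⋂ n ∈ S, (M n) ⁻¹' (⋃ i ∈ {i : I | mb i ∈ sets n}, Set.Ioo (a i) (b i))) := by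
      refine measure_eq_of_diff_null hΩnull ?_ ?_
      · intro u hu
        rw [Set.mem_compl_iff]
        intro huΩ
        apply hu.2
        have h2 := hu.1
        simp only [Set.mem_iInter, Set.mem_preimage] at h2 ⊢
        intro n hn
        refine (hmemZ u huΩ n (sets n)).mp ?_
        rw [← hZeq n u huΩ]
        exact h2 n hn
      · intro u hu
        rw [Set.mem_compl_iff]
        intro huΩ
        apply hu.2
        have h2 := hu.1
        simp only [Set.mem_iInter, Set.mem_preimage] at h2 ⊢
        intro n hn
        rw [hZeq n u huΩ]
        exact (hmemZ u huΩ n (sets n)).mpr (h2 n hn)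
    set N := (S.sup id) + 1 with hN_def
    have hSsub : S ⊆ Finset.range N := fun n hn =>
      Finset.mem_range.mpr (Nat.lt_succ_of_le (Finset.le_sup (f := id) hn))
    set E : ℕ → Set I := fun n => if n ∈ S then {i : I | mb i ∈ sets n} else Set.univ with hE_def
    have hB : lam (⋂ n ∈ S, (M n) ⁻¹' (⋃ i ∈ {i : I | mb i ∈ sets n}, Set.Ioo (a i) (b i)))
        = lam (⋂ r ∈ Finset.range N, (M r) ⁻¹' (⋃ i ∈ E r, Set.Ioo (a i) (b i))) := by
      refine measure_eq_of_diff_null hΩnull ?_ ?_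
      · intro u hu
        rw [Set.mem_compl_iff]
        intro huΩ
        apply hu.2
        have huA := hu.1
        simp only [Set.mem_iInter, Set.mem_preimage] at huA ⊢
        intro r _
        by_cases hrS : r ∈ S
        · simp only [hE_def, if_pos hrS]
          exact huA r hrS
        · simp only [hE_def, if_neg hrS, Set.biUnion_univ]
          exact Set.mem_iInter.mp huΩ.2 r
      · intro u hu
        exfalso
        obtain ⟨huB, huA⟩ := hu
        apply huA
        simp only [Set.mem_iInter, Set.mem_preimage] at huB ⊢
        intro n hn
        have h3 := huB n (hSsub hn)
        simpa only [hE_def, if_pos hn] using h3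
    have hCeq : (⋂ r ∈ Finset.range N, (M r) ⁻¹' (⋃ i ∈ E r, Set.Ioo (a i) (b i)))
        = H ⁻¹' (⋂ r ∈ Finset.range N, T'^[r] ⁻¹' (⋃ i ∈ E r, Set.Ioo (a i) (b i))) := by
      ext u
      simp only [Set.mem_iInter, Set.mem_preimage, hM_def]
    have hmeasE : ∀ r, MeasurableSet (⋃ i ∈ E r, Set.Ioo (a i) (b i)) :=
      fun r => MeasurableSet.biUnion (Set.to_countable _) (fun i _ => measurableSet_Ioo)
    have hmeasInter :
        MeasurableSet (⋂ r ∈ Finset.range N, T'^[r] ⁻¹' (⋃ i ∈ E r, Set.Ioo (a i) (b i))) :=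
      MeasurableSet.biInter (Finset.countable_toSet _)
        (fun r _ => (hmeasE r).preimage (hT'meas.iterate r))
    have hD : lam (⋂ r ∈ Finset.range N, (M r) ⁻¹' (⋃ i ∈ E r, Set.Ioo (a i) (b i)))
        = ∏ r ∈ Finset.range N, μ (⋃ i ∈ E r, Set.Ioo (a i) (b i)) := by
      rw [hCeq, ← Measure.map_apply hHmeas hmeasInter, hmapH]
      exact branch_indep_iter μ T' hT'meas (fun i => Set.Ioo (a i) (b i))
        (fun i => measurableSet_Ioo) hdisj hkey N E
    have hfull : μ (⋃ i ∈ (Set.univ : Set I), Set.Ioo (a i) (b i)) = 1 := by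
      rw [Set.biUnion_univ]
      have h1 := measure_add_measure_compl (μ := μ) (s := ⋃ i : I, Set.Ioo (a i) (b i))
        (MeasurableSet.iUnion fun i : I => measurableSet_Ioo)
      rw [hbadnull, add_zero, measure_univ] at h1
      exact h1
    have hE2 : ∏ r ∈ Finset.range N, μ (⋃ i ∈ E r, Set.Ioo (a i) (b i))
        = ∏ n ∈ S, μ (⋃ i ∈ {i : I | mb i ∈ sets n}, Set.Ioo (a i) (b i)) := by
      rw [← Finset.prod_subset hSsub
        (fun r _ hrS => by simp only [hE_def, if_neg hrS]; exact hfull)]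
      exact Finset.prod_congr rfl (fun n hn => by simp only [hE_def, if_pos hn])
    rw [hA, hB, hD, hE2]
    exact (Finset.prod_congr rfl (fun n _ => hsingleM n (sets n))).symm
  · -- identical distribution
    intro n m
    refine ⟨(hZ0meas.comp (hMmeas n)).aemeasurable.congr (hZae n).symm,
      (hZ0meas.comp (hMmeas m)).aemeasurable.congr (hZae m).symm, ?_⟩
    have key : ∀ r : ℕ, lam.map (fun x => cocycle F (h x) (r+1) - cocycle F (h x) r)
        = μ.map Z0 := by
      intro r
      rw [Measure.map_congr (hZae r)]
      have h4 : (fun u => Z0 (M r u)) = Z0 ∘ (M r) := rfl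
      rw [h4, ← Measure.map_map hZ0meas (hMmeas r), hmapM r]
    rw [key n, key m]
  · -- increment distribution
    intro n m
    have hc0 : ∀ y, cocycle F y 0 = 0 := by
      intro y
      unfold cocycle
      rw [if_pos (fun kk hkk => absurd hkk (Nat.not_lt_zero kk))]
      simp
    have hRset : {x | x ∈ Set.Icc (0:ℝ) 1 ∧ cocycle F (h x) 1 = m} =
        ((fun x => cocycle F (h x) (0 + 1) - cocycle F (h x) 0) ⁻¹' {m}) ∩ Set.Icc 0 1 := by
      ext x
      simp only [Set.mem_inter_iff, Set.mem_preimage, Set.mem_setOf_eq, Set.mem_singleton_iff,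
        hc0, sub_zero, zero_add]
      tauto
    calc lam {x | cocycle F (h x) (n + 1) - cocycle F (h x) n = m}
        = μ (⋃ i ∈ {i : I | mb i ∈ ({m} : Set ℤ)}, Set.Ioo (a i) (b i)) := hsingleM n {m}
      _ = lam ((fun x => cocycle F (h x) (0 + 1) - cocycle F (h x) 0) ⁻¹' {m}) :=
          (hsingleM 0 {m}).symm
      _ = volume {x | x ∈ Set.Icc (0:ℝ) 1 ∧ cocycle F (h x) 1 = m} := by
          rw [hRset, hlam_def]
          exact Measure.restrict_apply' measurableSet_Icc
end
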